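/- arXiv:1807.02174 — 5 statements merged into one kernel-verified Lean document; each statement's English description precedes it below -/
import Mathlib

section
/- Let 1 ≤ p < ∞ and assume that the measure μ on ℝ is Lipschitz p-admissible within a bounded open interval I₀, and let θ > 1. Then dμ = w dt on I₀ for some nonnegative measurable weight w, and w satisfies the A_p condition within θ^{-1}I₀ (the interval with the same midpoint as I₀ and length |I₀|/θ), with an A_p constant depending only on θ and on the admissibility constants of μ. -/
open MeasureTheory Set Filter
open scoped ENNReal NNReal Topology

noncomputable section

/-- A "measure on ℝ" in the sense of the paper: positive and finite on all
nonempty bounded open intervals (balls). -/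
def IsMeasureOnR (μ : Measure ℝ) : Prop :=
  ∀ a b : ℝ, a < b → 0 < μ (Ioo a b) ∧ μ (Ioo a b) < ⊤

/-- `g` is an upper gradient of `u` on the interval `J ⊆ ℝ`. -/
def IsUpperGradientOn (g u : ℝ → ℝ) (J : Set ℝ) : Prop :=
  (∀ x, 0 ≤ g x) ∧ Measurable g ∧
    ∀ a b : ℝ, a ≤ b → Icc a b ⊆ J →
      ENNReal.ofReal |u b - u a| ≤ ∫⁻ t in Icc a b, ENNReal.ofReal (g t)

/-- `μ` is doubling within the set `B₀` with constant `Cd`. -/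
def DoublingWithinC (μ : Measure ℝ) (Cd : ℝ≥0∞) (B₀ : Set ℝ) : Prop :=
  ∀ x r : ℝ, 0 < r → Ioo (x - r) (x + r) ⊆ B₀ →
    μ (Ioo (x - 2*r) (x + 2*r)) ≤ Cd * μ (Ioo (x - r) (x + r))

/-- `μ` is doubling within the set `B₀`. -/
def DoublingWithin (μ : Measure ℝ) (B₀ : Set ℝ) : Prop :=
  ∃ Cd : ℝ≥0∞, 0 < Cd ∧ Cd < ⊤ ∧ DoublingWithinC μ Cd B₀

/-- The left-hand side `⨍_B |u - u_B| dμ` of the Poincaré inequality,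
computed in `ℝ≥0∞`. -/
def PoinLHS (μ : Measure ℝ) (u : ℝ → ℝ) (B : Set ℝ) : ℝ≥0∞ :=
  (∫⁻ t in B, ENNReal.ofReal |u t - ⨍ s in B, u s ∂μ| ∂μ) / μ B

/-- The quantity `(⨍_B g^p dμ)^(1/p)` computed in `ℝ≥0∞`. -/
def PoinRHS (μ : Measure ℝ) (g : ℝ → ℝ≥0∞) (p : ℝ) (B : Set ℝ) : ℝ≥0∞ :=
  ((∫⁻ t in B, g t ^ p ∂μ) / μ B) ^ (1/p)

/-- `μ` supports the `p`-Poincaré inequality within `B₀` with constant `C`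
and dilation constant `lam`. -/
def PoincareWithinC (μ : Measure ℝ) (p C lam : ℝ) (B₀ : Set ℝ) : Prop :=
  ∀ x r : ℝ, 0 < r → Ioo (x - r) (x + r) ⊆ B₀ →
    ∀ u g : ℝ → ℝ,
      IntegrableOn u (Ioo (x - lam*r) (x + lam*r)) μ →
      IsUpperGradientOn g u (Ioo (x - lam*r) (x + lam*r)) →
      PoinLHS μ u (Ioo (x - r) (x + r)) ≤
        ENNReal.ofReal (C * r) *
          PoinRHS μ (fun t => ENNReal.ofReal (g t)) p (Ioo (x - lam*r) (x + lam*r))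

/-- `μ` supports the `p`-Poincaré inequality within `B₀`. -/
def PoincareWithin (μ : Measure ℝ) (p : ℝ) (B₀ : Set ℝ) : Prop :=
  ∃ C > (0:ℝ), ∃ lam ≥ (1:ℝ), PoincareWithinC μ p C lam B₀

/-- `μ` is `p`-admissible within `B₀`. -/
def AdmissibleWithin (μ : Measure ℝ) (p : ℝ) (B₀ : Set ℝ) : Prop :=
  DoublingWithin μ B₀ ∧ PoincareWithin μ p B₀

/-- `μ` is locally `p`-admissible. -/
def LocallyAdmissible (μ : Measure ℝ) (p : ℝ) : Prop :=
  ∀ x : ℝ, ∃ R > (0:ℝ), AdmissibleWithin μ p (Ioo (x - R) (x + R))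

/-- The pointwise upper Lipschitz constant
`Lip u(x) = limsup_{y→x, y ∈ s} |u(y)-u(x)|/|y-x|`, computed in `ℝ≥0∞`. -/
def eLipWithin (u : ℝ → ℝ) (s : Set ℝ) (x : ℝ) : ℝ≥0∞ :=
  Filter.limsup (fun y => ENNReal.ofReal (|u y - u x| / |y - x|)) (𝓝[s \ {x}] x)

/-- `μ` supports the Lipschitz `p`-Poincaré inequality within `B₀` with
constant `C` and dilation constant `lam`. -/
def LipPoincareWithinC (μ : Measure ℝ) (p C lam : ℝ) (B₀ : Set ℝ) : Prop :=
  ∀ x r : ℝ, 0 < r → Ioo (x - r) (x + r) ⊆ B₀ →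
    ∀ (u : ℝ → ℝ) (K : ℝ≥0), LipschitzOnWith K u (Ioo (x - lam*r) (x + lam*r)) →
      PoinLHS μ u (Ioo (x - r) (x + r)) ≤
        ENNReal.ofReal (C * r) *
          PoinRHS μ (eLipWithin u (Ioo (x - lam*r) (x + lam*r))) p
            (Ioo (x - lam*r) (x + lam*r))

/-- `μ` supports the Lipschitz `p`-Poincaré inequality within `B₀`. -/
def LipPoincareWithin (μ : Measure ℝ) (p : ℝ) (B₀ : Set ℝ) : Prop :=
  ∃ C > (0:ℝ), ∃ lam ≥ (1:ℝ), LipPoincareWithinC μ p C lam B₀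

/-- `μ` is Lipschitz `p`-admissible within `B₀`. -/
def LipAdmissibleWithin (μ : Measure ℝ) (p : ℝ) (B₀ : Set ℝ) : Prop :=
  DoublingWithin μ B₀ ∧ LipPoincareWithin μ p B₀

/-- `μ` is locally Lipschitz `p`-admissible. -/
def LocallyLipAdmissible (μ : Measure ℝ) (p : ℝ) : Prop :=
  ∀ x : ℝ, ∃ R > (0:ℝ), LipAdmissibleWithin μ p (Ioo (x - R) (x + R))

/-- The Muckenhoupt `A_p` condition for `w` on the set `B` with constant `C`
(for `p = 1` and `p ≠ 1` respectively). -/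
def ApOn (p : ℝ) (w : ℝ → ℝ) (B : Set ℝ) (C : ℝ) : Prop :=
  (p = 1 →
    (∫⁻ x in B, ENNReal.ofReal (w x)) / volume B ≤
      ENNReal.ofReal C * essInf (fun x => ENNReal.ofReal (w x)) (volume.restrict B)) ∧
  (p ≠ 1 →
    (∫⁻ x in B, ENNReal.ofReal (w x)) / volume B ≤
      ENNReal.ofReal C *
        ((∫⁻ x in B, ENNReal.ofReal (w x) ^ (1/(1-p))) / volume B) ^ (1-p))

/-- `w` is an `A_p` weight within `B₀`. -/
def ApWithin (p : ℝ) (w : ℝ → ℝ) (B₀ : Set ℝ) : Prop :=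
  ∃ C > (0:ℝ), ∀ x r : ℝ, 0 < r → Ioo (x - r) (x + r) ⊆ B₀ →
    ApOn p w (Ioo (x - r) (x + r)) C

/-- `w` is a local `A_p` weight. -/
def LocalAp (p : ℝ) (w : ℝ → ℝ) : Prop :=
  ∀ x : ℝ, ∃ R > (0:ℝ), ApWithin p w (Ioo (x - R) (x + R))

/-- `w` is a global `A_p` weight. -/
def GlobalAp (p : ℝ) (w : ℝ → ℝ) : Prop :=
  ∃ C > (0:ℝ), ∀ x r : ℝ, 0 < r → ApOn p w (Ioo (x - r) (x + r)) C

end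

/-!
The Lipschitz Poincaré inequality is tested on primitives `u` of bounded upper semicontinuous
functions `k ≥ 0`, for which `Lip u ≤ k` pointwise. Since `u` is monotone, doubling bounds its
increment across `B(z, τρ)` by the oscillation `⨍_{B(z, ρ)} |u - u_B| dμ`; this gives the weak
reverse Hölder inequality `⨍_{B(z, τρ)} k dx ≤ C (⨍_{B(z, λρ)} k ^ p dμ) ^ (1 / p)`, which extends
to bounded measurable `k` by the Vitali–Carathéodory theorem.

For `k` the indicator of the complement of a Lebesgue-null set `S`, it shows that `S` misses a
fixed fraction of the `μ`-mass of every interval. Covering a compact null set `K` by finitely many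
disjoint intervals inside an open `U ⊇ K` with `μ U` close to `μ K` then forces `μ K = 0`, so
`dμ = w dx` on `I₀`.
For `k` the indicator of `{w < m}` (`p = 1`), resp. the truncations of `w ^ (1 / (1 - p))`
(`p > 1`), the same inequality is the `A_p` condition on `B(z, τρ)`, with `τ = θ⁻¹`.
-/

namespace ENNReal

theorem rpow_le_rpow_of_nonpos {x y : ℝ≥0∞} {z : ℝ} (hz : z ≤ 0) (h : x ≤ y) :
    y ^ z ≤ x ^ z := by
  rw [← neg_neg z, rpow_neg y, rpow_neg x]
  exact ENNReal.inv_le_inv.2 (rpow_le_rpow h (neg_nonneg.2 hz))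

theorem mul_rpow_one_div_one_sub_le {a b : ℝ≥0∞} {p : ℝ} (hp : p ≠ 1) (hab : a ≤ b) (hb0 : b ≠ 0)
    (hbt : b ≠ ⊤) : a * (b ^ (1 / (1 - p))) ^ p ≤ b ^ (1 / (1 - p)) := by
  have hexp : 1 + 1 / (1 - p) * p = 1 / (1 - p) := by
    field_simp [sub_ne_zero.2 hp.symm]; ring
  calc a * (b ^ (1 / (1 - p))) ^ p ≤ b ^ (1 : ℝ) * b ^ (1 / (1 - p) * p) := by
        rw [rpow_one, ← rpow_mul]; gcongr
    _ = b ^ (1 / (1 - p)) := by rw [← rpow_add _ _ hb0 hbt, hexp]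

theorem rpow_sub_one_le_of_le_mul_rpow {x c d : ℝ≥0∞} {p : ℝ} (hp : 1 < p) (hx : x ≠ ⊤)
    (h : x ≤ c * (x * d) ^ (1 / p)) : x ^ (p - 1) ≤ c ^ p * d := by
  rcases eq_or_ne x 0 with rfl | hx0
  · simp [zero_rpow_of_pos (sub_pos.2 hp)]
  have hpow : x ^ p ≤ c ^ p * (x * d) := by
    have := rpow_le_rpow h (by linarith : 0 ≤ p)
    rwa [mul_rpow_of_nonneg _ _ (by linarith), ← rpow_mul, one_div_mul_cancel (by linarith),
      rpow_one] at this
  rw [← ENNReal.mul_le_mul_iff_left hx0 hx]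
  calc x ^ (p - 1) * x = x ^ (p - 1) * x ^ (1 : ℝ) := by rw [rpow_one]
    _ = x ^ p := by rw [← rpow_add _ _ hx0 hx, sub_add_cancel]
    _ ≤ c ^ p * d * x := by rw [mul_assoc, mul_comm d]; exact hpow

theorem inv_rpow_le_of_one_le_mul_rpow {c q : ℝ≥0∞} {p : ℝ} (hp : 0 < p)
    (h : 1 ≤ c * q ^ (1 / p)) : (c ^ p)⁻¹ ≤ q := by
  have h' : 1 ≤ c ^ p * q := by
    have := rpow_le_rpow h hp.le
    rwa [one_rpow, mul_rpow_of_nonneg _ _ hp.le, ← rpow_mul, one_div_mul_cancel hp.ne',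
      rpow_one] at this
  rw [ENNReal.inv_le_iff_le_mul]
  · exact h'
  · intro _ h0; simp [h0] at h'
  · intro _ h0; simp [h0] at h'

end ENNReal

theorem exists_upperSemicontinuous_le_lintegral_le_add {α : Type*} [TopologicalSpace α]
    [MeasurableSpace α] [BorelSpace α] {ν : Measure α} [ν.WeaklyRegular] {g : α → ℝ≥0∞}
    (hg : ∀ x, g x ≠ ⊤) (hfin : ∫⁻ x, g x ∂ν ≠ ⊤) {δ : ℝ≥0∞} (hδ : δ ≠ 0) :
    ∃ k : α → ℝ≥0, UpperSemicontinuous k ∧ (∀ x, (k x : ℝ≥0∞) ≤ g x) ∧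
      ∫⁻ x, g x ∂ν ≤ ∫⁻ x, k x ∂ν + δ := by
  have hcoe : ∀ x, ((g x).toNNReal : ℝ≥0∞) = g x := fun x => ENNReal.coe_toNNReal (hg x)
  obtain ⟨k, hkg, hk, hint⟩ := exists_upperSemicontinuous_le_lintegral_le
    (fun x => (g x).toNNReal) (by simpa only [hcoe] using hfin) hδ
  exact ⟨k, hk, fun x => (ENNReal.coe_le_coe.2 (hkg x)).trans_eq (hcoe x),
    by simpa only [hcoe] using hint⟩

theorem MeasureTheory.Measure.AbsolutelyContinuous.exists_ofReal_density {α : Type*}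
    [MeasurableSpace α] {ν μ : Measure α} [SigmaFinite ν] [ν.HaveLebesgueDecomposition μ]
    (h : ν ≪ μ) :
    ∃ w : α → ℝ, (∀ x, 0 ≤ w x) ∧ Measurable w ∧
      μ.withDensity (fun x => ENNReal.ofReal (w x)) = ν := by
  refine ⟨fun x => (ν.rnDeriv μ x).toReal, fun _ => ENNReal.toReal_nonneg,
    (ν.measurable_rnDeriv μ).ennreal_toReal, ?_⟩
  conv_rhs => rw [← Measure.withDensity_rnDeriv_eq ν μ h]
  refine withDensity_congr_ae ?_
  filter_upwards [Measure.rnDeriv_lt_top ν μ] with x hx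
  exact ENNReal.ofReal_toReal hx.ne

theorem measure_eq_setLIntegral_of_restrict_eq_withDensity {α : Type*} [MeasurableSpace α]
    {μ ν : Measure α} {W : α → ℝ≥0∞} {B E : Set α}
    (hres : μ.restrict B = (ν.restrict B).withDensity W) (hE : MeasurableSet E) (hEB : E ⊆ B) :
    μ E = ∫⁻ x in E, W x ∂ν := by
  rw [← inter_eq_left.2 hEB, ← Measure.restrict_apply hE, hres, withDensity_apply _ hE,
    Measure.restrict_restrict hE]

theorem restrict_eq_withDensity_of_subset {α : Type*} [MeasurableSpace α] {μ ν : Measure α}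
    {W : α → ℝ≥0∞} {s t : Set α} (hst : s ⊆ t) (hs : MeasurableSet s)
    (h : μ.restrict t = (ν.withDensity W).restrict t) :
    μ.restrict s = (ν.restrict s).withDensity W := by
  rw [← Measure.restrict_restrict_of_subset hst, h, Measure.restrict_restrict_of_subset hst,
    restrict_withDensity hs]

theorem IsOpen.eq_Ioo_csInf_csSup {c : Set ℝ} (hc : IsOpen c) (hcc : IsConnected c)
    (hcb : Bornology.IsBounded c) : c = Ioo (sInf c) (sSup c) := by
  refine Subset.antisymm (fun x hx => ?_) (hcc.Ioo_csInf_csSup_subset hcb.bddBelow hcb.bddAbove)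
  obtain ⟨l, r, hlr, hsub⟩ := mem_nhds_iff_exists_Ioo_subset.1 (hc.mem_nhds hx)
  have hl := csInf_le hcb.bddBelow (hsub ⟨by linarith [hlr.1], by linarith [hlr.1, hlr.2]⟩ :
    (l + x) / 2 ∈ c)
  have hr := le_csSup hcb.bddAbove (hsub ⟨by linarith [hlr.1, hlr.2], by linarith [hlr.2]⟩ :
    (x + r) / 2 ∈ c)
  exact ⟨by linarith [hlr.1], by linarith [hlr.2]⟩

theorem IsCompact.exists_finset_Ioo_cover {K U : Set ℝ} (hK : IsCompact K) (hU : IsOpen U)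
    (hUb : Bornology.IsBounded U) (hKU : K ⊆ U) :
    ∃ C : Finset (Set ℝ), (∀ c ∈ C, c ⊆ U ∧ ∃ a b, a < b ∧ c = Ioo a b) ∧
      (C : Set (Set ℝ)).PairwiseDisjoint id ∧ K ⊆ ⋃ c ∈ C, c := by
  classical
  obtain ⟨t, ht⟩ := hK.elim_finite_subcover (fun x : K => connectedComponentIn U x)
    (fun _ => hU.connectedComponentIn)
    (fun y hy => mem_iUnion.2 ⟨⟨y, hy⟩, mem_connectedComponentIn (hKU hy)⟩)
  refine ⟨t.image fun x : K => connectedComponentIn U x, ?_, ?_, fun y hy => ?_⟩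
  · simp only [Finset.mem_image]
    rintro _ ⟨x, -, rfl⟩
    have hc := hU.connectedComponentIn.eq_Ioo_csInf_csSup
      (isConnected_connectedComponentIn_iff.2 (hKU x.2))
      (hUb.subset (connectedComponentIn_subset _ _))
    have hxc : (x : ℝ) ∈ Ioo _ _ := hc ▸ mem_connectedComponentIn (hKU x.2)
    exact ⟨connectedComponentIn_subset _ _, _, _, hxc.1.trans hxc.2, hc⟩
  · simp only [Finset.coe_image]
    rintro _ ⟨x, -, rfl⟩ _ ⟨y, -, rfl⟩ hne
    refine Set.disjoint_left.2 fun w (hwx : w ∈ connectedComponentIn U x)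
      (hwy : w ∈ connectedComponentIn U y) => hne ?_
    exact (connectedComponentIn_eq hwx).trans (connectedComponentIn_eq hwy).symm
  · obtain ⟨x, hx, hyx⟩ := mem_iUnion₂.1 (ht hy)
    exact mem_biUnion (Finset.mem_image_of_mem _ hx) hyx

theorem measure_add_mul_le_of_forall_Ioo {μ : Measure ℝ} {K U : Set ℝ} {β : ℝ≥0∞}
    (hK : IsCompact K) (hU : IsOpen U) (hUb : Bornology.IsBounded U) (hKU : K ⊆ U)
    (h : ∀ a b, a < b → Ioo a b ⊆ U → μ (K ∩ Ioo a b) + β * μ (Ioo a b) ≤ μ (Ioo a b)) :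
    μ K + β * μ K ≤ μ U := by
  obtain ⟨C, hC, hdisj, hKC⟩ := hK.exists_finset_Ioo_cover hU hUb hKU
  have hper : ∀ c ∈ C, μ (K ∩ c) + β * μ c ≤ μ c := fun c hc => by
    obtain ⟨hcU, a, b, hab, rfl⟩ := hC c hc
    exact h a b hab hcU
  calc μ K + β * μ K ≤ ∑ c ∈ C, μ (K ∩ c) + β * ∑ c ∈ C, μ c := by
        gcongr
        · exact (measure_mono fun y hy => by simpa [hy] using hKC hy).trans
            (measure_biUnion_finset_le C _)
        · exact (measure_mono hKC).trans (measure_biUnion_finset_le C id)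
    _ = ∑ c ∈ C, (μ (K ∩ c) + β * μ c) := by rw [Finset.mul_sum, Finset.sum_add_distrib]
    _ ≤ ∑ c ∈ C, μ c := Finset.sum_le_sum hper
    _ = μ (⋃ c ∈ C, c) := by
        refine (measure_biUnion_finset hdisj fun c hc => ?_).symm
        obtain ⟨-, a, b, -, rfl⟩ := hC c hc
        exact measurableSet_Ioo
    _ ≤ μ U := measure_mono (iUnion₂_subset fun c hc => (hC c hc).1)

section Primitive

variable {f : ℝ → ℝ≥0} {M : ℝ≥0}

theorem intervalIntegrable_coe_of_le (hf : Measurable f) (hfM : ∀ x, f x ≤ M) (a b : ℝ) :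
    IntervalIntegrable (fun t => (f t : ℝ)) volume a b :=
  (intervalIntegrable_const (c := (M : ℝ))).mono_fun' hf.coe_nnreal_real.aestronglyMeasurable
    (ae_of_all _ fun t => by simpa using hfM t)

theorem ofReal_intervalIntegral_eq_setLIntegral (hf : Measurable f) (hfM : ∀ x, f x ≤ M)
    {a b : ℝ} (hab : a ≤ b) :
    ENNReal.ofReal (∫ t in a..b, (f t : ℝ)) = ∫⁻ t in Ioo a b, (f t : ℝ≥0∞) := by
  rw [intervalIntegral.integral_of_le hab, Measure.restrict_congr_set Ioo_ae_eq_Ioc,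
    lintegral_coe_eq_integral]
  exact (intervalIntegrable_coe_of_le hf hfM a b).1

end Primitive

theorem eLipWithin_le_of_upperSemicontinuous {u : ℝ → ℝ} {k : ℝ → ℝ≥0}
    (hk : UpperSemicontinuous k)
    (hu : ∀ x y (c : ℝ≥0), (∀ t ∈ uIoc x y, k t ≤ c) → |u y - u x| ≤ c * |y - x|)
    (s : Set ℝ) (x : ℝ) : eLipWithin u s x ≤ k x := by
  refine ENNReal.le_of_forall_pos_le_add fun ε hε _ => ?_
  obtain ⟨δ, hδ, hkδ⟩ := Metric.eventually_nhds_iff.1 (hk x _ (lt_add_of_pos_right (k x) hε))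
  rw [eLipWithin, ← ENNReal.coe_add]
  refine limsup_le_of_le (by isBoundedDefault) ?_
  filter_upwards [self_mem_nhdsWithin, nhdsWithin_le_nhds (Metric.ball_mem_nhds x hδ)]
    with y hy hyδ
  have hyx : 0 < |y - x| := abs_pos.2 (sub_ne_zero.2 hy.2)
  rw [← ENNReal.ofReal_coe_nnreal]
  refine ENNReal.ofReal_le_ofReal ((div_le_iff₀ hyx).2 (hu x y _ fun t ht => (hkδ ?_).le))
  rw [Real.dist_eq]
  exact (abs_sub_left_of_mem_uIcc (uIoc_subset_uIcc ht)).trans_lt hyδ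

theorem PoinRHS_mono {μ : Measure ℝ} {g h : ℝ → ℝ≥0∞} {p : ℝ} (hp : 0 ≤ p) (B : Set ℝ)
    (hgh : ∀ t, g t ≤ h t) : PoinRHS μ g p B ≤ PoinRHS μ h p B := by
  unfold PoinRHS
  gcongr with t
  exact hgh t

section IsMeasureOnR

variable {μ : Measure ℝ}

theorem IsMeasureOnR.isLocallyFiniteMeasure (hμ : IsMeasureOnR μ) :
    IsLocallyFiniteMeasure μ :=
  ⟨fun x => ⟨Ioo (x - 1) (x + 1), Ioo_mem_nhds (by linarith) (by linarith),
    (hμ _ _ (by linarith)).2⟩⟩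

theorem IsMeasureOnR.measure_Ioo_ne_zero (hμ : IsMeasureOnR μ) {a b : ℝ} (hab : a < b) :
    μ (Ioo a b) ≠ 0 :=
  (hμ a b hab).1.ne'

theorem IsMeasureOnR.measure_Ioo_ne_top (hμ : IsMeasureOnR μ) (a b : ℝ) : μ (Ioo a b) ≠ ⊤ := by
  rcases lt_or_ge a b with hab | hab
  · exact (hμ a b hab).2.ne
  · simp [Ioo_eq_empty (not_lt.2 hab)]

end IsMeasureOnR

/-- The constant `Cd ^ N * CPI * ρ` of the weak reverse Hölder inequality divided by the length
`2τρ` of `B(z, τρ)`; its `p`-th power is the `A_p` constant. -/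
noncomputable def apConst (Cd : ℝ≥0∞) (N : ℕ) (CPI τ : ℝ) : ℝ≥0∞ :=
  Cd ^ N * ENNReal.ofReal CPI / ENNReal.ofReal (2 * τ)

section ApConst

variable {Cd : ℝ≥0∞} {N : ℕ} {CPI τ : ℝ}

theorem apConst_ne_zero (hCd0 : Cd ≠ 0) (hCPI : 0 < CPI) : apConst Cd N CPI τ ≠ 0 := by
  simp [apConst, hCd0, hCPI, ENNReal.mul_eq_top]

theorem apConst_ne_top (hCd : Cd ≠ ⊤) (hτ0 : 0 < τ) : apConst Cd N CPI τ ≠ ⊤ := by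
  refine ENNReal.div_ne_top (ENNReal.mul_ne_top (ENNReal.pow_ne_top hCd) ENNReal.ofReal_ne_top) ?_
  simpa using hτ0

theorem apConst_mul_volume_Ioo (hτ0 : 0 < τ) {z ρ : ℝ} (hρ : 0 ≤ ρ) :
    apConst Cd N CPI τ * volume (Ioo (z - τ * ρ) (z + τ * ρ)) =
      Cd ^ N * ENNReal.ofReal (CPI * ρ) := by
  rw [Real.volume_Ioo, show z + τ * ρ - (z - τ * ρ) = 2 * τ * ρ by ring,
    ENNReal.ofReal_mul (by positivity), ENNReal.ofReal_mul' hρ, apConst, ← mul_assoc,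
    ENNReal.div_mul_cancel (by simpa using hτ0) ENNReal.ofReal_ne_top, mul_assoc]

end ApConst

section Admissible

variable {μ : Measure ℝ} {Cd : ℝ≥0∞} {B₀ : Set ℝ} {p CPI lam τ : ℝ} {N : ℕ} {z ρ : ℝ}
  {w : ℝ → ℝ}

theorem exists_two_le_pow_mul_one_sub {τ : ℝ} (hτ1 : τ < 1) :
    ∃ N : ℕ, 2 ≤ (3/2 : ℝ) ^ N * (1 - τ) := by
  obtain ⟨N, hN⟩ := pow_unbounded_of_one_lt (2 / (1 - τ)) (by norm_num : (1:ℝ) < 3/2)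
  exact ⟨N, ((div_lt_iff₀ (by linarith)).1 hN).le⟩

/-- Each step enlarges the radius by `3/2` and recentres so that the new ball stays inside both
the big ball and the double of the previous one. -/
theorem DoublingWithinC.measure_Ioo_le_pow_mul (hD : DoublingWithinC μ Cd B₀) (n : ℕ)
    {y s : ℝ} (hs : 0 < s) (hsub : Ioo (y - s) (y + s) ⊆ Ioo (z - ρ) (z + ρ))
    (hB : Ioo (z - ρ) (z + ρ) ⊆ B₀) (hρ : ρ ≤ (3/2) ^ n * s) :
    μ (Ioo (z - ρ) (z + ρ)) ≤ Cd ^ n * μ (Ioo (y - s) (y + s)) := by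
  induction n generalizing y s with
  | zero =>
    have hys := (Ioo_subset_Ioo_iff (by linarith : y - s < y + s)).1 hsub
    obtain rfl : y = z := by simp only [pow_zero, one_mul] at hρ; linarith [hys.1, hys.2]
    obtain rfl : s = ρ := by simp only [pow_zero, one_mul] at hρ; linarith [hys.1, hys.2]
    simp
  | succ n ih =>
    have hys := (Ioo_subset_Ioo_iff (by linarith : y - s < y + s)).1 hsub
    set s' := min (3/2 * s) ρ
    set y' := max (z - (ρ - s')) (min y (z + (ρ - s')))
    have hs's : s ≤ s' := le_min (by linarith) (by linarith [hys.1, hys.2])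
    have hs'le : s' ≤ 3/2 * s := min_le_left _ _
    have hs'ρ : s' ≤ ρ := min_le_right _ _
    have hy'lo : z - (ρ - s') ≤ y' := le_max_left _ _
    have hy'hi : y' ≤ z + (ρ - s') := max_le (by linarith) (min_le_right _ _)
    have hy'y₁ : y - (s' - s) ≤ y' :=
      le_max_of_le_right (le_min (by linarith) (by linarith [hys.2]))
    have hy'y₂ : y' ≤ y + (s' - s) := max_le (by linarith [hys.1]) (min_le_of_left_le (by linarith))
    have hρ' : ρ ≤ (3/2) ^ n * s' := by
      rcases min_choice (3/2 * s) ρ with h | h <;> simp only [s', h]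
      · rw [pow_succ] at hρ; linarith
      · have : (1:ℝ) ≤ (3/2) ^ n := one_le_pow₀ (by norm_num)
        nlinarith
    have hdouble : μ (Ioo (y' - s') (y' + s')) ≤ Cd * μ (Ioo (y - s) (y + s)) :=
      (measure_mono (Ioo_subset_Ioo (by linarith) (by linarith))).trans
        (hD y s hs (hsub.trans hB))
    calc μ (Ioo (z - ρ) (z + ρ)) ≤ Cd ^ n * μ (Ioo (y' - s') (y' + s')) :=
          ih (by linarith) (Ioo_subset_Ioo (by linarith) (by linarith)) hρ'
      _ ≤ Cd ^ n * (Cd * μ (Ioo (y - s) (y + s))) := by gcongr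
      _ = Cd ^ (n + 1) * μ (Ioo (y - s) (y + s)) := by ring

theorem DoublingWithinC.measure_Ioo_le_pow_mul_slivers (hD : DoublingWithinC μ Cd B₀)
    (hτ0 : 0 < τ) (hτ1 : τ < 1) (hN : 2 ≤ (3/2) ^ N * (1 - τ)) (hρ : 0 < ρ)
    (hB : Ioo (z - ρ) (z + ρ) ⊆ B₀) :
    μ (Ioo (z - ρ) (z + ρ)) ≤ Cd ^ N * μ (Ioo (z + τ * ρ) (z + ρ)) ∧
      μ (Ioo (z - ρ) (z + ρ)) ≤ Cd ^ N * μ (Ioo (z - ρ) (z - τ * ρ)) := by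
  -- each sliver is the ball of radius `(1 - τ) ρ / 2` centred at `z ± (1 + τ) ρ / 2`
  have hsliver : ∀ c : ℝ, Ioo (c - (1 - τ) / 2 * ρ) (c + (1 - τ) / 2 * ρ) ⊆ Ioo (z - ρ) (z + ρ) →
      μ (Ioo (z - ρ) (z + ρ)) ≤ Cd ^ N * μ (Ioo (c - (1 - τ) / 2 * ρ) (c + (1 - τ) / 2 * ρ)) :=
    fun c hc => hD.measure_Ioo_le_pow_mul N (by nlinarith) hc hB (by nlinarith)
  constructor
  · convert hsliver (z + (1 + τ) / 2 * ρ) (Ioo_subset_Ioo (by nlinarith) (by linarith)) using 4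
      <;> ring
  · convert hsliver (z - (1 + τ) / 2 * ρ) (Ioo_subset_Ioo (by linarith) (by nlinarith)) using 4
      <;> ring

/-- On the right sliver of `B(z, ρ) \ B(z, τρ)` we have `|u - m| ≥ u (z + τρ) - m`, on the left
one `|u - m| ≥ m - u (z - τρ)`, and each sliver carries a fixed fraction of the mass of
`B(z, ρ)`. -/
theorem ofReal_sub_mul_measure_le_lintegral (hD : DoublingWithinC μ Cd B₀)
    (hτ0 : 0 < τ) (hτ1 : τ < 1) (hN : 2 ≤ (3/2) ^ N * (1 - τ)) (hρ : 0 < ρ)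
    (hB : Ioo (z - ρ) (z + ρ) ⊆ B₀) {u : ℝ → ℝ} (hu : Monotone u) (m : ℝ) :
    ENNReal.ofReal (u (z + τ * ρ) - u (z - τ * ρ)) * μ (Ioo (z - ρ) (z + ρ)) ≤
      Cd ^ N * ∫⁻ t in Ioo (z - ρ) (z + ρ), ENNReal.ofReal |u t - m| ∂μ := by
  obtain ⟨hright, hleft⟩ := hD.measure_Ioo_le_pow_mul_slivers hτ0 hτ1 hN hρ hB
  have hmeas : Measurable fun t => ENNReal.ofReal |u t - m| :=
    ((hu.measurable.sub_const m).abs).ennreal_ofReal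
  have hSp : ENNReal.ofReal (u (z + τ * ρ) - m) * μ (Ioo (z + τ * ρ) (z + ρ)) ≤
      ∫⁻ t in Ioo (z + τ * ρ) (z + ρ), ENNReal.ofReal |u t - m| ∂μ := by
    rw [← setLIntegral_const]
    refine setLIntegral_mono hmeas fun t ht => ENNReal.ofReal_le_ofReal ?_
    linarith [le_abs_self (u t - m), hu ht.1.le]
  have hSm : ENNReal.ofReal (m - u (z - τ * ρ)) * μ (Ioo (z - ρ) (z - τ * ρ)) ≤
      ∫⁻ t in Ioo (z - ρ) (z - τ * ρ), ENNReal.ofReal |u t - m| ∂μ := by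
    rw [← setLIntegral_const]
    refine setLIntegral_mono hmeas fun t ht => ENNReal.ofReal_le_ofReal ?_
    linarith [neg_abs_le (u t - m), hu ht.2.le]
  have hunion : (∫⁻ t in Ioo (z + τ * ρ) (z + ρ), ENNReal.ofReal |u t - m| ∂μ) +
      ∫⁻ t in Ioo (z - ρ) (z - τ * ρ), ENNReal.ofReal |u t - m| ∂μ ≤
      ∫⁻ t in Ioo (z - ρ) (z + ρ), ENNReal.ofReal |u t - m| ∂μ := by
    rw [← lintegral_union measurableSet_Ioo
      (Ioo_disjoint_Ioo.2 ((min_le_right _ _).trans (le_max_of_le_left (by nlinarith))))]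
    exact lintegral_mono_set (union_subset (Ioo_subset_Ioo (by nlinarith) le_rfl)
      (Ioo_subset_Ioo le_rfl (by nlinarith)))
  calc ENNReal.ofReal (u (z + τ * ρ) - u (z - τ * ρ)) * μ (Ioo (z - ρ) (z + ρ))
      ≤ (ENNReal.ofReal (u (z + τ * ρ) - m) + ENNReal.ofReal (m - u (z - τ * ρ))) *
          μ (Ioo (z - ρ) (z + ρ)) := by
        gcongr
        rw [← sub_add_sub_cancel _ m]
        exact ENNReal.ofReal_add_le
    _ ≤ ENNReal.ofReal (u (z + τ * ρ) - m) * (Cd ^ N * μ (Ioo (z + τ * ρ) (z + ρ))) +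
          ENNReal.ofReal (m - u (z - τ * ρ)) * (Cd ^ N * μ (Ioo (z - ρ) (z - τ * ρ))) := by
        rw [add_mul]; gcongr
    _ = Cd ^ N * (ENNReal.ofReal (u (z + τ * ρ) - m) * μ (Ioo (z + τ * ρ) (z + ρ)) +
          ENNReal.ofReal (m - u (z - τ * ρ)) * μ (Ioo (z - ρ) (z - τ * ρ))) := by ring
    _ ≤ Cd ^ N * ∫⁻ t in Ioo (z - ρ) (z + ρ), ENNReal.ofReal |u t - m| ∂μ := by
        gcongr
        exact (add_le_add hSp hSm).trans hunion

/-- The Poincaré inequality applied to the primitive `u` of `k`, whose pointwise Lipschitz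
constant is at most `k` by upper semicontinuity. -/
theorem setLIntegral_le_of_upperSemicontinuous (hp : 0 ≤ p) (hμ : IsMeasureOnR μ)
    (hD : DoublingWithinC μ Cd B₀) (hPI : LipPoincareWithinC μ p CPI lam B₀)
    (hτ0 : 0 < τ) (hτ1 : τ < 1) (hN : 2 ≤ (3/2) ^ N * (1 - τ)) (hρ : 0 < ρ)
    (hB : Ioo (z - ρ) (z + ρ) ⊆ B₀) {k : ℝ → ℝ≥0} (hk : UpperSemicontinuous k) {M : ℝ≥0}
    (hkM : ∀ x, k x ≤ M) :
    ∫⁻ t in Ioo (z - τ * ρ) (z + τ * ρ), (k t : ℝ≥0∞) ≤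
      Cd ^ N * ENNReal.ofReal (CPI * ρ) *
        PoinRHS μ (fun t => k t) p (Ioo (z - lam * ρ) (z + lam * ρ)) := by
  set u : ℝ → ℝ := fun t => ∫ s in (0:ℝ)..t, (k s : ℝ)
  have hint := intervalIntegrable_coe_of_le hk.measurable hkM
  have hincr : ∀ x y, u y - u x = ∫ s in x..y, (k s : ℝ) := fun x y =>
    intervalIntegral.integral_interval_sub_left (hint 0 y) (hint 0 x)
  have hmono : Monotone u := fun x y hxy => by
    have := intervalIntegral.integral_nonneg (μ := volume) hxy fun t _ => (k t).coe_nonneg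
    linarith [hincr x y]
  have hu : ∀ x y (c : ℝ≥0), (∀ t ∈ uIoc x y, k t ≤ c) → |u y - u x| ≤ c * |y - x| :=
    fun x y c hc => by
      rw [hincr, ← Real.norm_eq_abs]
      refine intervalIntegral.norm_integral_le_of_norm_le_const fun t ht => ?_
      simpa using hc t ht
  have hlip : LipschitzWith M u := .of_dist_le_mul fun x y => by
    simpa only [Real.dist_eq] using hu y x M fun t _ => hkM t
  have hμB0 := hμ.measure_Ioo_ne_zero (by linarith : z - ρ < z + ρ)
  calc ∫⁻ t in Ioo (z - τ * ρ) (z + τ * ρ), (k t : ℝ≥0∞)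
      = ENNReal.ofReal (u (z + τ * ρ) - u (z - τ * ρ)) := by
        rw [hincr, ofReal_intervalIntegral_eq_setLIntegral hk.measurable hkM (by nlinarith)]
    _ ≤ Cd ^ N * PoinLHS μ u (Ioo (z - ρ) (z + ρ)) := by
        rw [PoinLHS, ← mul_div_assoc, ENNReal.le_div_iff_mul_le (.inl hμB0)
          (.inl (hμ.measure_Ioo_ne_top _ _))]
        exact ofReal_sub_mul_measure_le_lintegral hD hτ0 hτ1 hN hρ hB hmono _
    _ ≤ Cd ^ N * (ENNReal.ofReal (CPI * ρ) *
          PoinRHS μ (eLipWithin u (Ioo (z - lam * ρ) (z + lam * ρ))) p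
            (Ioo (z - lam * ρ) (z + lam * ρ))) := by
        gcongr
        exact hPI z ρ hρ hB u M hlip.lipschitzOnWith
    _ ≤ Cd ^ N * (ENNReal.ofReal (CPI * ρ) *
          PoinRHS μ (fun t => k t) p (Ioo (z - lam * ρ) (z + lam * ρ))) := by
        gcongr
        exact PoinRHS_mono hp _ (eLipWithin_le_of_upperSemicontinuous hk hu _)
    _ = _ := (mul_assoc _ _ _).symm

/-- The estimate of `setLIntegral_le_of_upperSemicontinuous` extends to bounded measurable
functions by the Vitali–Carathéodory theorem. -/
theorem setLIntegral_div_volume_le_apConst_mul (hp : 0 < p) (hlam : 1 ≤ lam) (hμ : IsMeasureOnR μ)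
    (hD : DoublingWithinC μ Cd B₀) (hPI : LipPoincareWithinC μ p CPI lam B₀)
    (hτ0 : 0 < τ) (hτ1 : τ < 1) (hN : 2 ≤ (3/2) ^ N * (1 - τ)) (hρ : 0 < ρ)
    (hB : Ioo (z - ρ) (z + ρ) ⊆ B₀) {g : ℝ → ℝ≥0∞} {M : ℝ≥0}
    (hgM : ∀ x, g x ≤ M) :
    (∫⁻ t in Ioo (z - τ * ρ) (z + τ * ρ), g t) / volume (Ioo (z - τ * ρ) (z + τ * ρ)) ≤
      apConst Cd N CPI τ * ((∫⁻ t in Ioo (z - τ * ρ) (z + τ * ρ), g t ^ p ∂μ) /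
        μ (Ioo (z - lam * ρ) (z + lam * ρ))) ^ (1 / p) := by
  set B' := Ioo (z - τ * ρ) (z + τ * ρ)
  have hB'lam : B' ⊆ Ioo (z - lam * ρ) (z + lam * ρ) := Ioo_subset_Ioo (by nlinarith) (by nlinarith)
  have hgt : ∀ t, g t ≠ ⊤ := fun t => ne_top_of_le_ne_top ENNReal.coe_ne_top (hgM t)
  suffices h : ∫⁻ t in B', g t ≤ Cd ^ N * ENNReal.ofReal (CPI * ρ) *
      ((∫⁻ t in B', g t ^ p ∂μ) / μ (Ioo (z - lam * ρ) (z + lam * ρ))) ^ (1 / p) by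
    rw [← apConst_mul_volume_Ioo hτ0 hρ.le, mul_right_comm] at h
    exact ENNReal.div_le_of_le_mul h
  have hind : ∫⁻ t, B'.indicator g t ∂(volume.restrict B') = ∫⁻ t in B', g t := by
    rw [lintegral_indicator measurableSet_Ioo, Measure.restrict_restrict measurableSet_Ioo,
      inter_self]
  have hfin : ∫⁻ t, B'.indicator g t ∂(volume.restrict B') ≠ ⊤ := by
    rw [hind]
    refine ne_top_of_le_ne_top ?_ ((lintegral_mono hgM).trans_eq (setLIntegral_const _ _))
    simp [B', Real.volume_Ioo, ENNReal.mul_eq_top]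
  refine ENNReal.le_of_forall_pos_le_add fun δ hδ _ => ?_
  obtain ⟨k, hk, hkg, hgk⟩ := exists_upperSemicontinuous_le_lintegral_le_add
    (fun t => ne_top_of_le_ne_top (hgt t) (indicator_le_self _ _ t)) hfin
    (δ := δ) (by simpa using hδ.ne')
  have hkM : ∀ t, k t ≤ M := fun t =>
    ENNReal.coe_le_coe.1 ((hkg t).trans ((indicator_le_self _ _ t).trans (hgM t)))
  have hkpow : ∀ t, (k t : ℝ≥0∞) ^ p ≤ B'.indicator (fun t => g t ^ p) t := fun t => by
    by_cases ht : t ∈ B'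
    · simpa [indicator_of_mem ht] using ENNReal.rpow_le_rpow (hkg t) hp.le
    · have : k t = 0 := by simpa [indicator_of_notMem ht] using hkg t
      simp [this, ENNReal.zero_rpow_of_pos hp]
  have hRHS : PoinRHS μ (fun t => k t) p (Ioo (z - lam * ρ) (z + lam * ρ)) ≤
      ((∫⁻ t in B', g t ^ p ∂μ) / μ (Ioo (z - lam * ρ) (z + lam * ρ))) ^ (1 / p) := by
    refine ENNReal.rpow_le_rpow (ENNReal.div_le_div_right ?_ _) (by positivity)
    calc ∫⁻ t in Ioo (z - lam * ρ) (z + lam * ρ), (k t : ℝ≥0∞) ^ p ∂μ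
        ≤ ∫⁻ t in Ioo (z - lam * ρ) (z + lam * ρ), B'.indicator (fun t => g t ^ p) t ∂μ :=
          lintegral_mono hkpow
      _ = ∫⁻ t in B', g t ^ p ∂μ := by
          rw [lintegral_indicator measurableSet_Ioo, Measure.restrict_restrict measurableSet_Ioo,
            inter_eq_left.2 hB'lam]
  calc ∫⁻ t in B', g t
      ≤ (∫⁻ t in B', (k t : ℝ≥0∞)) + δ := hind ▸ hgk
    _ ≤ Cd ^ N * ENNReal.ofReal (CPI * ρ) *
          PoinRHS μ (fun t => k t) p (Ioo (z - lam * ρ) (z + lam * ρ)) + δ := by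
        gcongr
        exact setLIntegral_le_of_upperSemicontinuous hp.le hμ hD hPI hτ0 hτ1 hN hρ hB hk hkM
    _ ≤ _ := by gcongr

/-- Testing the weak reverse Hölder inequality with the indicator of the complement of a
Lebesgue-null set `S` shows that `S` misses a fixed fraction of the mass of every ball. -/
theorem measure_inter_add_le (hp : 0 < p) (hlam : 1 ≤ lam) (hμ : IsMeasureOnR μ)
    (hD : DoublingWithinC μ Cd B₀) (hPI : LipPoincareWithinC μ p CPI lam B₀)
    (hτ0 : 0 < τ) (hτ1 : τ < 1) (hN : 2 ≤ (3/2) ^ N * (1 - τ)) {S : Set ℝ}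
    (hS : MeasurableSet S) (hS0 : volume S = 0) {a b : ℝ} (hab : a < b) (hI : Ioo a b ⊆ B₀) :
    μ (S ∩ Ioo a b) + (apConst Cd N CPI τ ^ p)⁻¹ * μ (Ioo a b) ≤ μ (Ioo a b) := by
  set z := (a + b) / 2
  set ρ := (b - a) / (2 * lam)
  have hρ : 0 < ρ := div_pos (by linarith) (by linarith)
  have hlamρ : lam * ρ = (b - a) / 2 := by simp only [ρ]; field_simp
  have hlamB : Ioo (z - lam * ρ) (z + lam * ρ) = Ioo a b := by
    rw [hlamρ]; congr 1 <;> ring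
  have hB : Ioo (z - ρ) (z + ρ) ⊆ Ioo a b := by
    rw [← hlamB]; exact Ioo_subset_Ioo (by nlinarith) (by nlinarith)
  set B' := Ioo (z - τ * ρ) (z + τ * ρ)
  have hB' : B' ⊆ Ioo a b := (Ioo_subset_Ioo (by nlinarith) (by nlinarith)).trans hB
  have hkey := setLIntegral_div_volume_le_apConst_mul hp hlam hμ hD hPI hτ0 hτ1 hN hρ (hB.trans hI)
    (g := Sᶜ.indicator 1) (M := 1) fun t => by by_cases ht : t ∈ S <;> simp [ht]
  have hvol : volume B' ≠ 0 := by simp [B', Real.volume_Ioo]; nlinarith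
  have hLHS : (∫⁻ t in B', Sᶜ.indicator 1 t) / volume B' = 1 := by
    rw [lintegral_indicator_one hS.compl, Measure.restrict_apply hS.compl,
      ← sdiff_eq_compl_inter, measure_sdiff_null hS0,
      ENNReal.div_self hvol (by simp [B', Real.volume_Ioo])]
  have hRHS : ∫⁻ t in B', Sᶜ.indicator 1 t ^ p ∂μ ≤ μ (Ioo a b \ S) := by
    have hpow : (fun t => Sᶜ.indicator (1 : ℝ → ℝ≥0∞) t ^ p) = Sᶜ.indicator 1 := by
      ext t; by_cases ht : t ∈ S <;> simp [ht, ENNReal.zero_rpow_of_pos hp]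
    rw [hpow, lintegral_indicator_one hS.compl, Measure.restrict_apply hS.compl,
      ← sdiff_eq_compl_inter]
    exact measure_mono (sdiff_subset_sdiff_left hB')
  rw [hLHS, hlamB] at hkey
  have hinv : (apConst Cd N CPI τ ^ p)⁻¹ * μ (Ioo a b) ≤ μ (Ioo a b \ S) := by
    rw [← ENNReal.le_div_iff_mul_le (.inl (hμ.measure_Ioo_ne_zero hab))
      (.inl (hμ.measure_Ioo_ne_top a b))]
    exact ENNReal.inv_rpow_le_of_one_le_mul_rpow hp (hkey.trans (by gcongr))
  calc μ (S ∩ Ioo a b) + (apConst Cd N CPI τ ^ p)⁻¹ * μ (Ioo a b)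
      ≤ μ (Ioo a b ∩ S) + μ (Ioo a b \ S) := by rw [inter_comm]; gcongr
    _ = μ (Ioo a b) := measure_inter_add_sdiff _ hS

theorem measure_eq_zero_of_isCompact (hp : 0 < p) (hlam : 1 ≤ lam) (hμ : IsMeasureOnR μ)
    (hCd : Cd ≠ ⊤) (hD : DoublingWithinC μ Cd B₀) (hPI : LipPoincareWithinC μ p CPI lam B₀)
    (hB₀ : IsOpen B₀) {K : Set ℝ} (hK : IsCompact K) (hKB : K ⊆ B₀) (hK0 : volume K = 0) :
    μ K = 0 := by
  have := hμ.isLocallyFiniteMeasure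
  -- any admissible `(τ, N)` will do; `(1/2, 4)` satisfies `2 ≤ (3/2) ^ 4 * (1 - 1/2)`
  set β := (apConst Cd 4 CPI (1/2) ^ p)⁻¹
  have hβ : β ≠ 0 := ENNReal.inv_ne_zero.2
    (ENNReal.rpow_ne_top_of_nonneg hp.le (apConst_ne_top hCd (by norm_num)))
  have hle : μ K + β * μ K ≤ μ K := by
    refine le_of_forall_gt fun r hr => ?_
    obtain ⟨U, hKU, hU, hUr⟩ := exists_isOpen_lt_of_lt K r hr
    obtain ⟨R, hKR⟩ := hK.isBounded.subset_ball 0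
    set V := U ∩ B₀ ∩ Metric.ball 0 R
    calc μ K + β * μ K
        ≤ μ V := measure_add_mul_le_of_forall_Ioo hK ((hU.inter hB₀).inter Metric.isOpen_ball)
          (Metric.isBounded_ball.subset inter_subset_right)
          (subset_inter (subset_inter hKU hKB) hKR) fun a b hab hI =>
            measure_inter_add_le hp hlam hμ hD hPI (by norm_num) (by norm_num) (by norm_num)
              hK.measurableSet hK0 hab (hI.trans (inter_subset_left.trans inter_subset_right))
      _ ≤ μ U := measure_mono (inter_subset_left.trans inter_subset_left)
      _ < r := hUr
  have hμK : μ K ≠ ⊤ := hK.measure_lt_top.ne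
  have : β * μ K = 0 :=
    le_antisymm ((ENNReal.add_le_add_iff_left hμK).1 (by simpa using hle)) bot_le
  exact (mul_eq_zero.1 this).resolve_left hβ

theorem IsMeasureOnR.absolutelyContinuous_restrict (hp : 0 < p) (hlam : 1 ≤ lam)
    (hμ : IsMeasureOnR μ) (hCd : Cd ≠ ⊤) (hD : DoublingWithinC μ Cd B₀)
    (hPI : LipPoincareWithinC μ p CPI lam B₀) (hB₀ : IsOpen B₀) : μ.restrict B₀ ≪ volume := by
  have := hμ.isLocallyFiniteMeasure
  refine Measure.AbsolutelyContinuous.mk fun s hs hs0 => ?_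
  rw [Measure.restrict_apply hs, (hs.inter hB₀.measurableSet).measure_eq_iSup_isCompact,
    ENNReal.iSup_eq_zero]
  intro K
  simp only [ENNReal.iSup_eq_zero]
  intro hKs hK
  exact measure_eq_zero_of_isCompact hp hlam hμ hCd hD hPI hB₀ hK (hKs.trans inter_subset_right)
    (measure_mono_null (hKs.trans inter_subset_left) hs0)

/-- Tested with the indicator of `{w < m}`, the weak reverse Hölder inequality for `p = 1`
forces `μ {w < m} ≥ m |{w < m}|` when `m = μ(B(z, λρ)) / |B(z, τρ)| / apConst`, which
contradicts `μ = w dx` unless `{w < m}` is null. -/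
theorem measure_div_volume_div_apConst_le_essInf (hlam : 1 ≤ lam) (hμ : IsMeasureOnR μ)
    (hCd0 : Cd ≠ 0) (hCd : Cd ≠ ⊤) (hCPI : 0 < CPI) (hD : DoublingWithinC μ Cd B₀)
    (hPI : LipPoincareWithinC μ 1 CPI lam B₀) (hτ0 : 0 < τ) (hτ1 : τ < 1)
    (hN : 2 ≤ (3/2) ^ N * (1 - τ)) (hρ : 0 < ρ) (hB : Ioo (z - ρ) (z + ρ) ⊆ B₀)
    (hw : Measurable w)
    (hres : μ.restrict (Ioo (z - τ * ρ) (z + τ * ρ)) =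
      (volume.restrict (Ioo (z - τ * ρ) (z + τ * ρ))).withDensity fun x => ENNReal.ofReal (w x)) :
    μ (Ioo (z - lam * ρ) (z + lam * ρ)) / volume (Ioo (z - τ * ρ) (z + τ * ρ)) /
        apConst Cd N CPI τ ≤
      essInf (fun x => ENNReal.ofReal (w x)) (volume.restrict (Ioo (z - τ * ρ) (z + τ * ρ))) := by
  set B' := Ioo (z - τ * ρ) (z + τ * ρ)
  set K := apConst Cd N CPI τ
  set L := μ (Ioo (z - lam * ρ) (z + lam * ρ))
  have hK0 : K ≠ 0 := apConst_ne_zero hCd0 hCPI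
  have hKt : K ≠ ⊤ := apConst_ne_top hCd hτ0
  have hL0 : L ≠ 0 := hμ.measure_Ioo_ne_zero (by nlinarith)
  have hLt : L ≠ ⊤ := hμ.measure_Ioo_ne_top _ _
  set m := L / volume B' / K
  set E := B' ∩ {x | ENNReal.ofReal (w x) < m}
  have hE : MeasurableSet E :=
    measurableSet_Ioo.inter (measurableSet_lt hw.ennreal_ofReal measurable_const)
  suffices hE0 : volume E = 0 by
    refine le_essInf_of_ae_le _ ((ae_restrict_iff' measurableSet_Ioo).2 ?_)
    refine measure_mono_null (fun x hx => ?_) hE0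
    by_contra hxE
    exact hx fun hxB => not_lt.1 fun hlt => hxE ⟨hxB, hlt⟩
  by_contra hE0
  have hkey : volume E / volume B' ≤ K * (μ E / L) := by
    have := setLIntegral_div_volume_le_apConst_mul one_pos hlam hμ hD hPI hτ0 hτ1 hN hρ hB
      (g := E.indicator 1) (M := 1) fun t => by by_cases ht : t ∈ E <;> simp [ht]
    have hEB : E ∩ B' = E := inter_eq_left.2 inter_subset_left
    simp only [ENNReal.rpow_one, div_one, lintegral_indicator_one hE,
      Measure.restrict_apply hE] at this
    rwa [hEB] at this
  have hμE := measure_eq_setLIntegral_of_restrict_eq_withDensity hres hE inter_subset_left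
  have hμE_lt : μ E < m * volume E := by
    rw [hμE, ← setLIntegral_const]
    refine setLIntegral_strict_mono hE hE0 measurable_const ?_ (ae_of_all _ fun x hx => hx.2)
    exact hμE ▸ ne_top_of_le_ne_top hLt
      (measure_mono (inter_subset_left.trans (Ioo_subset_Ioo (by nlinarith) (by nlinarith))))
  refine lt_irrefl (volume E / volume B') ?_
  calc volume E / volume B' ≤ K * (μ E / L) := hkey
    _ < K * (m * volume E / L) :=
        (ENNReal.mul_lt_mul_iff_right hK0 hKt).2 (ENNReal.div_lt_div_right hL0 hLt hμE_lt)
    _ = (K * K⁻¹) * (L * L⁻¹) * ((volume B')⁻¹ * volume E) := by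
        simp only [m, ENNReal.div_eq_inv_mul]; ring
    _ = volume E / volume B' := by
        rw [ENNReal.mul_inv_cancel hK0 hKt, ENNReal.mul_inv_cancel hL0 hLt, one_mul, one_mul,
          ENNReal.div_eq_inv_mul]

theorem setLIntegral_div_volume_le_mul_essInf (hlam : 1 ≤ lam) (hμ : IsMeasureOnR μ)
    (hCd0 : Cd ≠ 0) (hCd : Cd ≠ ⊤) (hCPI : 0 < CPI) (hD : DoublingWithinC μ Cd B₀)
    (hPI : LipPoincareWithinC μ 1 CPI lam B₀) (hτ0 : 0 < τ) (hτ1 : τ < 1)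
    (hN : 2 ≤ (3/2) ^ N * (1 - τ)) (hρ : 0 < ρ) (hB : Ioo (z - ρ) (z + ρ) ⊆ B₀)
    (hw : Measurable w)
    (hres : μ.restrict (Ioo (z - τ * ρ) (z + τ * ρ)) =
      (volume.restrict (Ioo (z - τ * ρ) (z + τ * ρ))).withDensity fun x => ENNReal.ofReal (w x)) :
    (∫⁻ x in Ioo (z - τ * ρ) (z + τ * ρ), ENNReal.ofReal (w x)) /
        volume (Ioo (z - τ * ρ) (z + τ * ρ)) ≤
      apConst Cd N CPI τ *
        essInf (fun x => ENNReal.ofReal (w x)) (volume.restrict (Ioo (z - τ * ρ) (z + τ * ρ))) := by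
  calc (∫⁻ x in Ioo (z - τ * ρ) (z + τ * ρ), ENNReal.ofReal (w x)) /
        volume (Ioo (z - τ * ρ) (z + τ * ρ))
      = μ (Ioo (z - τ * ρ) (z + τ * ρ)) / volume (Ioo (z - τ * ρ) (z + τ * ρ)) := by
        rw [measure_eq_setLIntegral_of_restrict_eq_withDensity hres measurableSet_Ioo subset_rfl]
    _ ≤ μ (Ioo (z - lam * ρ) (z + lam * ρ)) / volume (Ioo (z - τ * ρ) (z + τ * ρ)) :=
        ENNReal.div_le_div_right (measure_mono (Ioo_subset_Ioo (by nlinarith) (by nlinarith))) _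
    _ = apConst Cd N CPI τ * (μ (Ioo (z - lam * ρ) (z + lam * ρ)) /
          volume (Ioo (z - τ * ρ) (z + τ * ρ)) / apConst Cd N CPI τ) :=
        (ENNReal.mul_div_cancel' (by simp [apConst_ne_zero hCd0 hCPI])
          (by simp [apConst_ne_top hCd hτ0])).symm
    _ ≤ _ := by
        gcongr
        exact measure_div_volume_div_apConst_le_essInf hlam hμ hCd0 hCd hCPI hD hPI hτ0 hτ1 hN
          hρ hB hw hres

theorem setLIntegral_div_volume_rpow_sub_one_le (hp : 1 < p) (hlam : 1 ≤ lam) (hμ : IsMeasureOnR μ)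
    (hD : DoublingWithinC μ Cd B₀) (hPI : LipPoincareWithinC μ p CPI lam B₀) (hτ0 : 0 < τ)
    (hτ1 : τ < 1) (hN : 2 ≤ (3/2) ^ N * (1 - τ)) (hρ : 0 < ρ) (hB : Ioo (z - ρ) (z + ρ) ⊆ B₀)
    (hw : Measurable w)
    (hres : μ.restrict (Ioo (z - τ * ρ) (z + τ * ρ)) =
      (volume.restrict (Ioo (z - τ * ρ) (z + τ * ρ))).withDensity fun x => ENNReal.ofReal (w x))
    {g : ℝ → ℝ≥0∞} (hg : Measurable g) {M : ℝ≥0} (hgM : ∀ x, g x ≤ M)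
    (hwg : ∀ x, ENNReal.ofReal (w x) * g x ^ p ≤ g x) :
    ((∫⁻ x in Ioo (z - τ * ρ) (z + τ * ρ), g x) / volume (Ioo (z - τ * ρ) (z + τ * ρ))) ^ (p - 1)
      ≤ apConst Cd N CPI τ ^ p *
        (volume (Ioo (z - τ * ρ) (z + τ * ρ)) / μ (Ioo (z - lam * ρ) (z + lam * ρ))) := by
  set B' := Ioo (z - τ * ρ) (z + τ * ρ)
  set Y := (∫⁻ x in B', g x) / volume B'
  have hV0 : volume B' ≠ 0 := by simp [B', Real.volume_Ioo]; nlinarith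
  have hVt : volume B' ≠ ⊤ := by simp [B', Real.volume_Ioo]
  have hYt : Y ≠ ⊤ := by
    refine ENNReal.div_ne_top (ne_top_of_le_ne_top ?_
      ((lintegral_mono hgM).trans_eq (setLIntegral_const _ _))) hV0
    exact ENNReal.mul_ne_top ENNReal.coe_ne_top hVt
  have hμg : ∫⁻ x in B', g x ^ p ∂μ ≤ Y * volume B' := by
    rw [ENNReal.div_mul_cancel hV0 hVt, hres,
      lintegral_withDensity_eq_lintegral_mul _ hw.ennreal_ofReal (hg.pow_const p)]
    exact lintegral_mono hwg
  refine ENNReal.rpow_sub_one_le_of_le_mul_rpow hp hYt ?_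
  calc Y ≤ apConst Cd N CPI τ * ((∫⁻ x in B', g x ^ p ∂μ) /
          μ (Ioo (z - lam * ρ) (z + lam * ρ))) ^ (1 / p) :=
        setLIntegral_div_volume_le_apConst_mul (by linarith) hlam hμ hD hPI hτ0 hτ1 hN hρ hB hgM
    _ ≤ _ := by rw [← mul_div_assoc]; gcongr

/-- The truncations `max w (n + 1)⁻¹ ^ (1 / (1 - p))` are bounded test functions, and they
increase to `w ^ (1 / (1 - p))`. -/
theorem setLIntegral_rpow_div_volume_rpow_sub_one_le (hp : 1 < p) (hlam : 1 ≤ lam)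
    (hμ : IsMeasureOnR μ) (hD : DoublingWithinC μ Cd B₀)
    (hPI : LipPoincareWithinC μ p CPI lam B₀) (hτ0 : 0 < τ) (hτ1 : τ < 1)
    (hN : 2 ≤ (3/2) ^ N * (1 - τ)) (hρ : 0 < ρ) (hB : Ioo (z - ρ) (z + ρ) ⊆ B₀)
    (hw : Measurable w)
    (hres : μ.restrict (Ioo (z - τ * ρ) (z + τ * ρ)) =
      (volume.restrict (Ioo (z - τ * ρ) (z + τ * ρ))).withDensity fun x => ENNReal.ofReal (w x)) :
    ((∫⁻ x in Ioo (z - τ * ρ) (z + τ * ρ), ENNReal.ofReal (w x) ^ (1 / (1 - p))) /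
        volume (Ioo (z - τ * ρ) (z + τ * ρ))) ^ (p - 1) ≤
      apConst Cd N CPI τ ^ p *
        (volume (Ioo (z - τ * ρ) (z + τ * ρ)) / μ (Ioo (z - lam * ρ) (z + lam * ρ))) := by
  set B' := Ioo (z - τ * ρ) (z + τ * ρ)
  set e := 1 / (1 - p)
  have he : e ≤ 0 := div_nonpos_of_nonneg_of_nonpos zero_le_one (by linarith)
  have hV0 : volume B' ≠ 0 := by simp [B', Real.volume_Ioo]; nlinarith
  set f : ℕ → ℝ → ℝ≥0∞ := fun n x => max (ENNReal.ofReal (w x)) ((n : ℝ≥0∞) + 1)⁻¹ ^ e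
  have hf : ∀ n, Measurable (f n) := fun n =>
    (hw.ennreal_ofReal.max measurable_const).pow_const e
  have htrunc : ∀ n, ((∫⁻ x in B', f n x) / volume B') ^ (p - 1) ≤ apConst Cd N CPI τ ^ p *
      (volume B' / μ (Ioo (z - lam * ρ) (z + lam * ρ))) := by
    intro n
    have hbound : ∀ x, f n x ≤ (((n : ℝ≥0∞) + 1)⁻¹ ^ e).toNNReal := fun x => by
      rw [ENNReal.coe_toNNReal (by simp [ENNReal.rpow_eq_top_iff])]
      exact ENNReal.rpow_le_rpow_of_nonpos he (le_max_right _ _)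
    refine setLIntegral_div_volume_rpow_sub_one_le hp hlam hμ hD hPI hτ0 hτ1 hN hρ hB hw hres
      (hf n) hbound fun x => ENNReal.mul_rpow_one_div_one_sub_le hp.ne' (le_max_left _ _) ?_ ?_
    · exact ((ENNReal.inv_pos.2 (by simp)).trans_le (le_max_right _ _)).ne'
    · exact (max_lt ENNReal.ofReal_lt_top (ENNReal.inv_lt_top.2 (by positivity))).ne
  have hlim : Tendsto (fun n => ∫⁻ x in B', f n x) atTop
      (𝓝 (∫⁻ x in B', ENNReal.ofReal (w x) ^ e)) := by
    refine lintegral_tendsto_of_tendsto_of_monotone (fun n => (hf n).aemeasurable)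
      (ae_of_all _ fun x m n hmn => ?_) (ae_of_all _ fun x => ?_)
    · exact ENNReal.rpow_le_rpow_of_nonpos he (max_le_max le_rfl (by gcongr))
    · have hinv : Tendsto (fun n : ℕ => ((n : ℝ≥0∞) + 1)⁻¹) atTop (𝓝 0) := by
        simpa [Function.comp_def] using
          ENNReal.tendsto_inv_nat_nhds_zero.comp (tendsto_add_atTop_nat 1)
      simpa [f, Function.comp_def] using
        (ENNReal.continuous_rpow_const.tendsto _).comp (tendsto_const_nhds.max hinv)
  exact le_of_tendsto' ((ENNReal.continuous_rpow_const.tendsto _).comp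
    (ENNReal.Tendsto.div_const hlim (.inr hV0))) htrunc

theorem setLIntegral_div_volume_le_mul_rpow (hp : 1 < p) (hlam : 1 ≤ lam) (hμ : IsMeasureOnR μ)
    (hCd0 : Cd ≠ 0) (hCd : Cd ≠ ⊤) (hCPI : 0 < CPI) (hD : DoublingWithinC μ Cd B₀)
    (hPI : LipPoincareWithinC μ p CPI lam B₀) (hτ0 : 0 < τ) (hτ1 : τ < 1)
    (hN : 2 ≤ (3/2) ^ N * (1 - τ)) (hρ : 0 < ρ) (hB : Ioo (z - ρ) (z + ρ) ⊆ B₀)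
    (hw : Measurable w)
    (hres : μ.restrict (Ioo (z - τ * ρ) (z + τ * ρ)) =
      (volume.restrict (Ioo (z - τ * ρ) (z + τ * ρ))).withDensity fun x => ENNReal.ofReal (w x)) :
    (∫⁻ x in Ioo (z - τ * ρ) (z + τ * ρ), ENNReal.ofReal (w x)) /
        volume (Ioo (z - τ * ρ) (z + τ * ρ)) ≤
      apConst Cd N CPI τ ^ p *
        ((∫⁻ x in Ioo (z - τ * ρ) (z + τ * ρ), ENNReal.ofReal (w x) ^ (1 / (1 - p))) /
          volume (Ioo (z - τ * ρ) (z + τ * ρ))) ^ (1 - p) := by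
  set B' := Ioo (z - τ * ρ) (z + τ * ρ)
  set L := μ (Ioo (z - lam * ρ) (z + lam * ρ))
  set K := apConst Cd N CPI τ
  have hL0 : L ≠ 0 := hμ.measure_Ioo_ne_zero (by nlinarith)
  have hLt : L ≠ ⊤ := hμ.measure_Ioo_ne_top _ _
  have hKp0 : K ^ p ≠ 0 :=
    (ENNReal.rpow_pos (pos_iff_ne_zero.2 (apConst_ne_zero hCd0 hCPI)) (apConst_ne_top hCd hτ0)).ne'
  have hKpt : K ^ p ≠ ⊤ := ENNReal.rpow_ne_top_of_nonneg (by linarith) (apConst_ne_top hCd hτ0)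
  calc (∫⁻ x in B', ENNReal.ofReal (w x)) / volume B' = μ B' / volume B' := by
        rw [measure_eq_setLIntegral_of_restrict_eq_withDensity hres measurableSet_Ioo subset_rfl]
    _ ≤ L / volume B' :=
        ENNReal.div_le_div_right (measure_mono (Ioo_subset_Ioo (by nlinarith) (by nlinarith))) _
    _ = K ^ p * (K ^ p * (volume B' / L))⁻¹ := by
        rw [ENNReal.mul_inv (.inl hKp0) (.inl hKpt), ENNReal.inv_div (.inl hLt) (.inl hL0),
          ← mul_assoc, ENNReal.mul_inv_cancel hKp0 hKpt, one_mul]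
    _ ≤ K ^ p * (((∫⁻ x in B', ENNReal.ofReal (w x) ^ (1 / (1 - p))) / volume B') ^ (p - 1))⁻¹ := by
        gcongr
        exact setLIntegral_rpow_div_volume_rpow_sub_one_le hp hlam hμ hD hPI hτ0 hτ1 hN hρ hB hw
          hres
    _ = _ := by rw [← ENNReal.rpow_neg, neg_sub]

theorem apOn_of_restrict_eq_withDensity (hp : 1 ≤ p) (hlam : 1 ≤ lam) (hμ : IsMeasureOnR μ)
    (hCd0 : Cd ≠ 0) (hCd : Cd ≠ ⊤) (hCPI : 0 < CPI) (hD : DoublingWithinC μ Cd B₀)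
    (hPI : LipPoincareWithinC μ p CPI lam B₀) (hτ0 : 0 < τ) (hτ1 : τ < 1)
    (hN : 2 ≤ (3/2) ^ N * (1 - τ)) (hρ : 0 < ρ) (hB : Ioo (z - ρ) (z + ρ) ⊆ B₀)
    (hw : Measurable w)
    (hres : μ.restrict (Ioo (z - τ * ρ) (z + τ * ρ)) =
      (volume.restrict (Ioo (z - τ * ρ) (z + τ * ρ))).withDensity fun x => ENNReal.ofReal (w x)) :
    ApOn p w (Ioo (z - τ * ρ) (z + τ * ρ)) ((apConst Cd N CPI τ).toReal ^ p) := by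
  have hK : ENNReal.ofReal ((apConst Cd N CPI τ).toReal ^ p) = apConst Cd N CPI τ ^ p := by
    rw [← ENNReal.ofReal_rpow_of_nonneg ENNReal.toReal_nonneg (by linarith),
      ENNReal.ofReal_toReal (apConst_ne_top hCd hτ0)]
  refine ⟨fun hp1 => ?_, fun hp1 => ?_⟩
  · subst hp1
    rw [hK, ENNReal.rpow_one]
    exact setLIntegral_div_volume_le_mul_essInf hlam hμ hCd0 hCd hCPI hD hPI hτ0 hτ1 hN hρ hB hw
      hres
  · rw [hK]
    exact setLIntegral_div_volume_le_mul_rpow (lt_of_le_of_ne hp (Ne.symm hp1)) hlam hμ hCd0 hCd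
      hCPI hD hPI hτ0 hτ1 hN hρ hB hw hres

end Admissible

/-- Theorem 4.4: if `μ` is Lipschitz `p`-admissible within
a bounded open interval `I₀` (with explicit doubling constant `Cd` and
Poincaré constants `CPI`, `lam`) and `θ > 1`, then `dμ = w dt` on `I₀` with
`w` satisfying the `A_p` condition within `θ⁻¹I₀`, with an `A_p` constant
depending only on `θ`, `p` and the admissibility constants. -/
theorem Lipschitz_admissible_implies_Ap_within (p θ : ℝ) (hp : 1 ≤ p)
    (hθ : 1 < θ) (Cd : ℝ≥0∞) (hCd0 : 0 < Cd) (hCdtop : Cd < ⊤)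
    (CPI lam : ℝ) (hCPI : 0 < CPI) (hlam : 1 ≤ lam) :
    ∃ C' > (0:ℝ), ∀ (μ : Measure ℝ), IsMeasureOnR μ →
      ∀ x₀ R : ℝ, 0 < R →
        DoublingWithinC μ Cd (Ioo (x₀ - R) (x₀ + R)) →
        LipPoincareWithinC μ p CPI lam (Ioo (x₀ - R) (x₀ + R)) →
        ∃ w : ℝ → ℝ, (∀ x, 0 ≤ w x) ∧ Measurable w ∧
          μ.restrict (Ioo (x₀ - R) (x₀ + R)) =
            (volume.withDensity fun x => ENNReal.ofReal (w x)).restrict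
              (Ioo (x₀ - R) (x₀ + R)) ∧
          ∀ x r : ℝ, 0 < r → Ioo (x - r) (x + r) ⊆ Ioo (x₀ - R/θ) (x₀ + R/θ) →
            ApOn p w (Ioo (x - r) (x + r)) C' := by
  have hθ0 : 0 < θ := by linarith
  have hτ0 : 0 < θ⁻¹ := inv_pos.2 hθ0
  obtain ⟨N, hN⟩ := exists_two_le_pow_mul_one_sub (inv_lt_one_of_one_lt₀ hθ)
  refine ⟨(apConst Cd N CPI θ⁻¹).toReal ^ p, Real.rpow_pos_of_pos (ENNReal.toReal_pos
    (apConst_ne_zero hCd0.ne' hCPI) (apConst_ne_top hCdtop.ne hτ0)) p, ?_⟩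
  intro μ hμ x₀ R hR hD hPI
  have := hμ.isLocallyFiniteMeasure
  obtain ⟨w, hw0, hw, hdens⟩ := (hμ.absolutelyContinuous_restrict (by linarith) hlam hCdtop.ne
    hD hPI isOpen_Ioo).exists_ofReal_density
  have hrepr : μ.restrict (Ioo (x₀ - R) (x₀ + R)) =
      (volume.withDensity fun x => ENNReal.ofReal (w x)).restrict (Ioo (x₀ - R) (x₀ + R)) := by
    rw [hdens, Measure.restrict_restrict measurableSet_Ioo, inter_self]
  refine ⟨w, hw0, hw, hrepr, fun x r hr hsub => ?_⟩
  have hxr := (Ioo_subset_Ioo_iff (by linarith : x - r < x + r)).1 hsub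
  have hRθ : R = θ * (R / θ) := by field_simp
  have hB : Ioo (x - θ * r) (x + θ * r) ⊆ Ioo (x₀ - R) (x₀ + R) :=
    Ioo_subset_Ioo (by nlinarith [hxr.1, hxr.2]) (by nlinarith [hxr.1, hxr.2])
  have hres := restrict_eq_withDensity_of_subset (s := Ioo (x - r) (x + r))
    ((Ioo_subset_Ioo (by nlinarith) (by nlinarith)).trans hB) measurableSet_Ioo hrepr
  rw [← inv_mul_cancel_left₀ hθ0.ne' r] at hres ⊢
  exact apOn_of_restrict_eq_withDensity hp hlam hμ hCd0.ne' hCdtop.ne hCPI hD hPI hτ0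
    (inv_lt_one_of_one_lt₀ hθ) hN (by positivity) hB hw hres
end

section
/- Let 1 ≤ p < ∞ and let μ₁ and μ₂ be locally p-admissible measures on ℝ. Then μ = μ₁ + μ₂ is locally p-admissible on ℝ. -/
open MeasureTheory Set Filter
open scoped ENNReal NNReal Topology

/-!
On `ℝ` an upper gradient `g` of `u` dominates the oscillation of `u` on a ball `B` by `∫_B g dx`,
so `⨍_B |u - u_B| dμ ≤ ∫_B g dx` for every measure `μ`. Conversely, if `ν` is doubling and
supports a `p`-Poincaré inequality, test it on `2B` with the primitive of `g`: it is monotone, so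
its deviations from any constant on the two outer quarters of `2B` add up to at least its increase
`∫_B g dx` over `B`, and doubling gives both quarters a fixed fraction of `ν(2B)`. Hence
`∫_B g dx ≲ r_B (⨍_{2λB} g^p dν)^{1/p}`. For `μ = μ₁ + μ₂`, one of the `μᵢ` carries half of the
`μ`-mass of a large dilate `ΛB`; as `μᵢ ≤ μ` and `μᵢ` is doubling, its `p`-average over `2λᵢB`
is controlled by the `μ`-average over `ΛB`. Doubling of the sum is immediate.
-/

lemma Ioo_sub_add_subset {x r s : ℝ} (h : r ≤ s) :
    Ioo (x - r) (x + r) ⊆ Ioo (x - s) (x + s) :=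
  Ioo_subset_Ioo (by linarith) (by linarith)

lemma Ioo_sub_add_mul_subset {x r x₀ R s : ℝ} (hr : 0 < r) (hs : 1 ≤ s)
    (h : Ioo (x - r) (x + r) ⊆ Ioo (x₀ - R) (x₀ + R)) :
    Ioo (x - s * r) (x + s * r) ⊆ Ioo (x₀ - s * R) (x₀ + s * R) := by
  obtain ⟨h₁, h₂⟩ := (Ioo_subset_Ioo_iff (by linarith)).1 h
  exact Ioo_subset_Ioo (by nlinarith) (by nlinarith)

namespace IsMeasureOnR

variable {μ ν : Measure ℝ}

lemma add (hμ : IsMeasureOnR μ) (hν : IsMeasureOnR ν) : IsMeasureOnR (μ + ν) := fun a b hab =>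
  ⟨(hμ a b hab).1.trans_le (Measure.le_add_right le_rfl (Ioo a b)),
    by rw [Measure.add_apply]; exact ENNReal.add_lt_top.2 ⟨(hμ a b hab).2, (hν a b hab).2⟩⟩

lemma measure_Icc_ne_top (hμ : IsMeasureOnR μ) (a b : ℝ) : μ (Icc a b) ≠ ⊤ :=
  ne_top_of_le_ne_top (hμ (a - 1) (max a b + 1) (by linarith [le_max_left a b])).2.ne
    (measure_mono fun _ ht => ⟨by linarith [ht.1], by linarith [ht.2, le_max_right a b]⟩)

lemma integrableOn_Ioo_of_monotone (hμ : IsMeasureOnR μ) {u : ℝ → ℝ} (hu : Monotone u)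
    (a b : ℝ) : IntegrableOn u (Ioo a b) μ := by
  rcases le_or_gt b a with hba | hab
  · simp [Ioo_eq_empty hba.not_gt]
  · exact ((hu.monotoneOn _).integrableOn_of_measure_ne_top (isLeast_Icc hab.le)
      (isGreatest_Icc hab.le) (hμ.measure_Icc_ne_top a b) measurableSet_Icc).mono_set
      Ioo_subset_Icc_self

end IsMeasureOnR

lemma IsUpperGradientOn.mono {g u : ℝ → ℝ} {J J' : Set ℝ} (h : IsUpperGradientOn g u J')
    (hJ : J ⊆ J') : IsUpperGradientOn g u J :=
  ⟨h.1, h.2.1, fun a b hab hsub => h.2.2 a b hab (hsub.trans hJ)⟩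

namespace DoublingWithinC

variable {μ ν : Measure ℝ} {Cd Cd' : ℝ≥0∞} {B₀ : Set ℝ}

lemma mono {B₁ : Set ℝ} (h : DoublingWithinC μ Cd B₁) (hB : B₀ ⊆ B₁) :
    DoublingWithinC μ Cd B₀ :=
  fun x r hr hsub => h x r hr (hsub.trans hB)

lemma add (hμ : DoublingWithinC μ Cd B₀) (hν : DoublingWithinC ν Cd' B₀) :
    DoublingWithinC (μ + ν) (Cd + Cd') B₀ := by
  intro x r hr hsub
  simp only [Measure.add_apply, add_mul]
  gcongr
  · exact (hμ x r hr hsub).trans (by gcongr; exact le_self_add)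
  · exact (hν x r hr hsub).trans (by gcongr; exact le_add_self)

lemma measure_Ioo_two_pow_mul_le (h : DoublingWithinC μ Cd B₀) {c s : ℝ} (hs : 0 < s) (k : ℕ)
    (hsub : Ioo (c - 2 ^ k * s) (c + 2 ^ k * s) ⊆ B₀) :
    μ (Ioo (c - 2 ^ (k + 1) * s) (c + 2 ^ (k + 1) * s)) ≤
      Cd ^ (k + 1) * μ (Ioo (c - s) (c + s)) := by
  induction k with
  | zero => simpa using h c s hs (by simpa using hsub)
  | succ k ih =>
    have hsub' : Ioo (c - 2 ^ k * s) (c + 2 ^ k * s) ⊆ B₀ :=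
      (Ioo_sub_add_subset (by gcongr <;> norm_num)).trans hsub
    calc μ (Ioo (c - 2 ^ (k + 1 + 1) * s) (c + 2 ^ (k + 1 + 1) * s))
        = μ (Ioo (c - 2 * (2 ^ (k + 1) * s)) (c + 2 * (2 ^ (k + 1) * s))) := by ring_nf
      _ ≤ Cd * μ (Ioo (c - 2 ^ (k + 1) * s) (c + 2 ^ (k + 1) * s)) := h c _ (by positivity) hsub
      _ ≤ Cd * (Cd ^ (k + 1) * μ (Ioo (c - s) (c + s))) := by gcongr; exact ih hsub'
      _ = Cd ^ (k + 1 + 1) * μ (Ioo (c - s) (c + s)) := by ring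

lemma measure_Ioo_le_pow_three_mul (h : DoublingWithinC μ Cd B₀) {x r c : ℝ} (hr : 0 < r)
    (hsub : Ioo (x - 4 * r) (x + 4 * r) ⊆ B₀) (hc : c ∈ Icc (x - 3 / 2 * r) (x + 3 / 2 * r)) :
    μ (Ioo (x - 2 * r) (x + 2 * r)) ≤ Cd ^ 3 * μ (Ioo (c - r / 2) (c + r / 2)) := by
  obtain ⟨hc₁, hc₂⟩ := hc
  calc μ (Ioo (x - 2 * r) (x + 2 * r))
      ≤ μ (Ioo (c - 2 ^ (2 + 1) * (r / 2)) (c + 2 ^ (2 + 1) * (r / 2))) :=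
        measure_mono (Ioo_subset_Ioo (by linarith) (by linarith))
    _ ≤ Cd ^ 3 * μ (Ioo (c - r / 2) (c + r / 2)) :=
        h.measure_Ioo_two_pow_mul_le (by positivity) 2
          ((Ioo_subset_Ioo (by linarith) (by linarith)).trans hsub)

end DoublingWithinC

lemma DoublingWithin.add {μ ν : Measure ℝ} {B₀ : Set ℝ} (hμ : DoublingWithin μ B₀)
    (hν : DoublingWithin ν B₀) : DoublingWithin (μ + ν) B₀ := by
  obtain ⟨Cd, hCd0, hCdt, hCd⟩ := hμ
  obtain ⟨Cd', -, hCd't, hCd'⟩ := hν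
  exact ⟨Cd + Cd', hCd0.trans_le le_self_add, ENNReal.add_lt_top.2 ⟨hCdt, hCd't⟩, hCd.add hCd'⟩

lemma DoublingWithin.mono {μ : Measure ℝ} {B₀ B₁ : Set ℝ} (h : DoublingWithin μ B₁)
    (hB : B₀ ⊆ B₁) : DoublingWithin μ B₀ :=
  h.imp fun _ hCd => ⟨hCd.1, hCd.2.1, hCd.2.2.mono hB⟩

lemma PoincareWithin.mono {μ : Measure ℝ} {p : ℝ} {B₀ B₁ : Set ℝ} (h : PoincareWithin μ p B₁)
    (hB : B₀ ⊆ B₁) : PoincareWithin μ p B₀ := by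
  obtain ⟨C, hC, lam, hlam, hP⟩ := h
  exact ⟨C, hC, lam, hlam, fun x r hr hsub => hP x r hr (hsub.trans hB)⟩

lemma AdmissibleWithin.mono {μ : Measure ℝ} {p : ℝ} {B₀ B₁ : Set ℝ}
    (h : AdmissibleWithin μ p B₁) (hB : B₀ ⊆ B₁) : AdmissibleWithin μ p B₀ :=
  ⟨h.1.mono hB, h.2.mono hB⟩

lemma poinLHS_le_lintegral {μ : Measure ℝ} {B : Set ℝ} (hB : B.OrdConnected) (hμ0 : μ B ≠ 0)
    (hμt : μ B ≠ ⊤) {u g : ℝ → ℝ} (hu : IntegrableOn u B μ) (hg : IsUpperGradientOn g u B) :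
    PoinLHS μ u B ≤ ∫⁻ t in B, ENNReal.ofReal (g t) := by
  set G := ∫⁻ t in B, ENNReal.ofReal (g t)
  rcases eq_or_ne G ⊤ with hG | hG
  · simp [hG]
  have hosc : ∀ s ∈ B, ∀ t ∈ B, |u t - u s| ≤ G.toReal := by
    intro s hs t ht
    wlog hst : s ≤ t generalizing s t
    · rw [abs_sub_comm]
      exact this t ht s hs (le_of_not_ge hst)
    exact (ENNReal.ofReal_le_iff_le_toReal hG).1 <|
      (hg.2.2 s t hst (hB.out hs ht)).trans (lintegral_mono_set (hB.out hs ht))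
  have havg : ∀ t ∈ B, |u t - ⨍ s in B, u s ∂μ| ≤ G.toReal := fun t ht =>
    mem_Icc_iff_abs_le.2 <| (convex_Icc _ _).set_average_mem isClosed_Icc hμ0 hμt
      (ae_restrict_of_forall_mem hB.measurableSet fun s hs =>
        mem_Icc_iff_abs_le.1 (hosc s hs t ht)) hu
  refine ENNReal.div_le_of_le_mul ?_
  calc ∫⁻ t in B, ENNReal.ofReal |u t - ⨍ s in B, u s ∂μ| ∂μ
      ≤ ∫⁻ _ in B, G ∂μ := setLIntegral_mono' hB.measurableSet fun t ht =>
        ENNReal.ofReal_le_of_le_toReal (havg t ht)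
    _ = G * μ B := setLIntegral_const B G

section Primitive

variable {g : ℝ → ℝ}

lemma monotone_intervalIntegral (hg0 : ∀ t, 0 ≤ g t)
    (hgi : ∀ a b, IntervalIntegrable g volume a b) (a₀ : ℝ) :
    Monotone fun y => ∫ t in a₀..y, g t := by
  intro a b hab
  dsimp only
  have := intervalIntegral.integral_interval_sub_left (hgi a₀ b) (hgi a₀ a)
  linarith [intervalIntegral.integral_nonneg (μ := volume) hab fun t _ => hg0 t]

lemma ofReal_intervalIntegral_sub (hg0 : ∀ t, 0 ≤ g t)
    (hgi : ∀ a b, IntervalIntegrable g volume a b) (a₀ : ℝ) {a b : ℝ} (hab : a ≤ b) :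
    ENNReal.ofReal ((∫ t in a₀..b, g t) - ∫ t in a₀..a, g t) =
      ∫⁻ t in Ioc a b, ENNReal.ofReal (g t) := by
  rw [intervalIntegral.integral_interval_sub_left (hgi a₀ b) (hgi a₀ a),
    intervalIntegral.integral_of_le hab,
    ofReal_integral_eq_lintegral_ofReal (hgi a b).1 (ae_of_all _ hg0)]

lemma isUpperGradientOn_intervalIntegral (hg0 : ∀ t, 0 ≤ g t)
    (hgi : ∀ a b, IntervalIntegrable g volume a b) (hgm : Measurable g) (a₀ : ℝ) (J : Set ℝ) :
    IsUpperGradientOn g (fun y => ∫ t in a₀..y, g t) J := by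
  refine ⟨hg0, hgm, fun a b hab _ => ?_⟩
  rw [abs_of_nonneg (sub_nonneg.2 (monotone_intervalIntegral hg0 hgi a₀ hab)),
    ofReal_intervalIntegral_sub hg0 hgi a₀ hab]
  exact lintegral_mono_set Ioc_subset_Icc_self

end Primitive

lemma Monotone.min_measure_mul_le_lintegral {u : ℝ → ℝ} (hu : Monotone u) (ν : Measure ℝ)
    {a b : ℝ} (hab : a < b) {L R : Set ℝ} (hL : L ⊆ Iic a) (hR : R ⊆ Ici b)
    (hRm : MeasurableSet R) (m : ℝ) :
    min (ν L) (ν R) * ENNReal.ofReal (u b - u a) ≤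
      ∫⁻ t in L ∪ R, ENNReal.ofReal |u t - m| ∂ν := by
  have hf : Measurable fun t => ENNReal.ofReal |u t - m| :=
    (hu.measurable.sub_const m).abs.ennreal_ofReal
  calc min (ν L) (ν R) * ENNReal.ofReal (u b - u a)
      ≤ min (ν L) (ν R) * (ENNReal.ofReal (m - u a) + ENNReal.ofReal (u b - m)) := by
        gcongr
        rw [← sub_add_sub_cancel (u b) m (u a), add_comm]
        exact ENNReal.ofReal_add_le
    _ ≤ ν L * ENNReal.ofReal (m - u a) + ν R * ENNReal.ofReal (u b - m) := by
        rw [mul_add]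
        gcongr
        exacts [min_le_left _ _, min_le_right _ _]
    _ = ∫⁻ _ in L, ENNReal.ofReal (m - u a) ∂ν + ∫⁻ _ in R, ENNReal.ofReal (u b - m) ∂ν := by
        rw [setLIntegral_const, setLIntegral_const, mul_comm, mul_comm (ν R)]
    _ ≤ ∫⁻ t in L, ENNReal.ofReal |u t - m| ∂ν + ∫⁻ t in R, ENNReal.ofReal |u t - m| ∂ν := by
        refine add_le_add (setLIntegral_mono hf fun t ht => ENNReal.ofReal_le_ofReal ?_)
          (setLIntegral_mono hf fun t ht => ENNReal.ofReal_le_ofReal ?_)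
        · rw [abs_sub_comm]
          exact (sub_le_sub_left (hu (hL ht)) m).trans (le_abs_self _)
        · exact (sub_le_sub_right (hu (hR ht)) m).trans (le_abs_self _)
    _ = ∫⁻ t in L ∪ R, ENNReal.ofReal |u t - m| ∂ν :=
        (lintegral_union hRm ((Iic_disjoint_Ici.2 hab.not_ge).mono hL hR)).symm

lemma poinRHS_mono {μ : Measure ℝ} {f g : ℝ → ℝ≥0∞} {p : ℝ} (hp : 0 ≤ p) (S : Set ℝ)
    (hfg : ∀ t, f t ≤ g t) : PoinRHS μ f p S ≤ PoinRHS μ g p S := by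
  unfold PoinRHS
  gcongr with t
  exact hfg t

lemma lintegral_ofReal_eq_iSup_min (μ : Measure ℝ) {g : ℝ → ℝ} (hgm : Measurable g) :
    ∫⁻ t, ENNReal.ofReal (g t) ∂μ = ⨆ N : ℕ, ∫⁻ t, ENNReal.ofReal (min (g t) N) ∂μ := by
  rw [← lintegral_iSup (fun N => (hgm.min measurable_const).ennreal_ofReal)
    fun N M hNM t => ENNReal.ofReal_le_ofReal (min_le_min_left _ (Nat.cast_le.2 hNM))]
  congr with t
  refine le_antisymm ?_ (iSup_le fun N => ENNReal.ofReal_le_ofReal (min_le_left _ _))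
  obtain ⟨N, hN⟩ := exists_nat_ge (g t)
  exact le_iSup_of_le N (by rw [min_eq_left hN])

lemma poinRHS_le_rpow_mul {μ ν : Measure ℝ} (hle : ν ≤ μ) {S' S : Set ℝ} (hS : S' ⊆ S)
    {K : ℝ≥0∞} (hK0 : K ≠ 0) (hKt : K ≠ ⊤) (hK : μ S ≤ K * ν S') {p : ℝ} (hp : 0 ≤ p)
    (g : ℝ → ℝ≥0∞) : PoinRHS ν g p S' ≤ K ^ (1 / p) * PoinRHS μ g p S := by
  unfold PoinRHS
  rw [← ENNReal.mul_rpow_of_nonneg _ _ (by positivity)]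
  gcongr ?_ ^ _
  set X := ∫⁻ t in S, g t ^ p ∂μ
  calc (∫⁻ t in S', g t ^ p ∂ν) / ν S'
      ≤ X / ν S' := by gcongr; exact lintegral_mono' (Measure.restrict_mono hS hle) le_rfl
    _ = K * X / (K * ν S') := (ENNReal.mul_div_mul_left _ _ hK0 hKt).symm
    _ ≤ K * X / μ S := by gcongr
    _ = K * (X / μ S) := mul_div_assoc _ _ _

-- `Cd ^ 3` locates the outer quarters of `2B`, `(2 * Cd ^ (k + 1)) ^ (1 / p)` passes from the
-- `2λB`-average of a summand carrying half the mass to the `2 ^ (k + 1) B`-average of the sum.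
noncomputable def lintegralBoundConst (Cd : ℝ≥0∞) (C p : ℝ) (k : ℕ) : ℝ≥0∞ :=
  Cd ^ 3 * ENNReal.ofReal (2 * C) * (2 * Cd ^ (k + 1)) ^ (1 / p)

lemma lintegralBoundConst_ne_top {Cd : ℝ≥0∞} (hCdt : Cd ≠ ⊤) {p : ℝ} (hp : 0 ≤ p) (C : ℝ)
    (k : ℕ) : lintegralBoundConst Cd C p k ≠ ⊤ := by
  unfold lintegralBoundConst
  have : 2 * Cd ^ (k + 1) ≠ ⊤ := ENNReal.mul_ne_top (by norm_num) (ENNReal.pow_ne_top hCdt)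
  exact ENNReal.mul_ne_top (ENNReal.mul_ne_top (ENNReal.pow_ne_top hCdt) ENNReal.ofReal_ne_top)
    (ENNReal.rpow_ne_top_of_nonneg (by positivity) this)

section Poincare

variable {ν : Measure ℝ} {p C lam : ℝ} {Cd : ℝ≥0∞} {B₀ : Set ℝ}

lemma DoublingWithinC.measure_mul_ofReal_sub_le_lintegral (hdbl : DoublingWithinC ν Cd B₀)
    {x r : ℝ} (hr : 0 < r) (hsub : Ioo (x - 4 * r) (x + 4 * r) ⊆ B₀) {u : ℝ → ℝ}
    (hu : Monotone u) (m : ℝ) :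
    ν (Ioo (x - 2 * r) (x + 2 * r)) * ENNReal.ofReal (u (x + r) - u (x - r)) ≤
      Cd ^ 3 * ∫⁻ t in Ioo (x - 2 * r) (x + 2 * r), ENNReal.ofReal |u t - m| ∂ν := by
  set L := Ioo (x - 3 / 2 * r - r / 2) (x - 3 / 2 * r + r / 2)
  set R := Ioo (x + 3 / 2 * r - r / 2) (x + 3 / 2 * r + r / 2)
  have hLR : ν (Ioo (x - 2 * r) (x + 2 * r)) ≤ Cd ^ 3 * min (ν L) (ν R) := by
    rw [mul_min]
    exact le_min (hdbl.measure_Ioo_le_pow_three_mul hr hsub ⟨by linarith, by linarith⟩)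
      (hdbl.measure_Ioo_le_pow_three_mul hr hsub ⟨by linarith, by linarith⟩)
  have hosc := hu.min_measure_mul_le_lintegral ν (a := x - r) (b := x + r) (by linarith)
    (L := L) (R := R) (fun t ht => by simp only [mem_Iic]; linarith [ht.2])
    (fun t ht => by simp only [mem_Ici]; linarith [ht.1]) measurableSet_Ioo m
  calc ν (Ioo (x - 2 * r) (x + 2 * r)) * ENNReal.ofReal (u (x + r) - u (x - r))
      ≤ Cd ^ 3 * min (ν L) (ν R) * ENNReal.ofReal (u (x + r) - u (x - r)) := by gcongr
    _ ≤ Cd ^ 3 * ∫⁻ t in Ioo (x - 2 * r) (x + 2 * r), ENNReal.ofReal |u t - m| ∂ν := by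
        rw [mul_assoc]
        gcongr
        refine hosc.trans (lintegral_mono_set (union_subset ?_ ?_)) <;>
          exact Ioo_subset_Ioo (by linarith) (by linarith)

lemma lintegral_le_poinRHS_of_intervalIntegrable (hν : IsMeasureOnR ν)
    (hdbl : DoublingWithinC ν Cd B₀) (hP : PoincareWithinC ν p C lam B₀) {x r : ℝ} (hr : 0 < r)
    (hsub : Ioo (x - 4 * r) (x + 4 * r) ⊆ B₀) {g : ℝ → ℝ} (hg0 : ∀ t, 0 ≤ g t)
    (hgm : Measurable g) (hgi : ∀ a b, IntervalIntegrable g volume a b) :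
    ∫⁻ t in Ioo (x - r) (x + r), ENNReal.ofReal (g t) ≤
      Cd ^ 3 * ENNReal.ofReal (C * (2 * r)) *
        PoinRHS ν (fun t => ENNReal.ofReal (g t)) p
          (Ioo (x - lam * (2 * r)) (x + lam * (2 * r))) := by
  set u : ℝ → ℝ := fun y => ∫ t in (0 : ℝ)..y, g t
  have hu : Monotone u := monotone_intervalIntegral hg0 hgi 0
  set B := Ioo (x - 2 * r) (x + 2 * r)
  set Q := ENNReal.ofReal (C * (2 * r)) *
    PoinRHS ν (fun t => ENNReal.ofReal (g t)) p (Ioo (x - lam * (2 * r)) (x + lam * (2 * r)))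
  obtain ⟨hB0, hBt⟩ := hν (x - 2 * r) (x + 2 * r) (by linarith)
  have hpoinc : ∫⁻ t in B, ENNReal.ofReal |u t - ⨍ s in B, u s ∂ν| ∂ν ≤ Q * ν B :=
    (ENNReal.div_le_iff hB0.ne' hBt.ne).1 <|
      hP x (2 * r) (by linarith) ((Ioo_sub_add_subset (by linarith)).trans hsub) u g
        (hν.integrableOn_Ioo_of_monotone hu _ _)
        (isUpperGradientOn_intervalIntegral hg0 hgi hgm _ _)
  have hint : ∫⁻ t in Ioo (x - r) (x + r), ENNReal.ofReal (g t) =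
      ENNReal.ofReal (u (x + r) - u (x - r)) := by
    rw [setLIntegral_congr Ioo_ae_eq_Ioc, ofReal_intervalIntegral_sub hg0 hgi 0 (by linarith)]
  rw [hint, ← ENNReal.mul_le_mul_iff_right hB0.ne' hBt.ne]
  calc ν B * ENNReal.ofReal (u (x + r) - u (x - r))
      ≤ Cd ^ 3 * ∫⁻ t in B, ENNReal.ofReal |u t - ⨍ s in B, u s ∂ν| ∂ν :=
        hdbl.measure_mul_ofReal_sub_le_lintegral hr hsub hu _
    _ ≤ Cd ^ 3 * (Q * ν B) := by gcongr
    _ = ν B * (Cd ^ 3 * Q) := by ring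
    _ = _ := by simp only [Q, B, mul_assoc]

lemma lintegral_le_poinRHS (hν : IsMeasureOnR ν) (hp : 0 ≤ p) (hdbl : DoublingWithinC ν Cd B₀)
    (hP : PoincareWithinC ν p C lam B₀) {x r : ℝ} (hr : 0 < r)
    (hsub : Ioo (x - 4 * r) (x + 4 * r) ⊆ B₀) {g : ℝ → ℝ} (hg0 : ∀ t, 0 ≤ g t)
    (hgm : Measurable g) :
    ∫⁻ t in Ioo (x - r) (x + r), ENNReal.ofReal (g t) ≤
      Cd ^ 3 * ENNReal.ofReal (C * (2 * r)) *
        PoinRHS ν (fun t => ENNReal.ofReal (g t)) p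
          (Ioo (x - lam * (2 * r)) (x + lam * (2 * r))) := by
  -- Truncating `g` at height `N` makes it locally integrable, so that it has a primitive.
  rw [lintegral_ofReal_eq_iSup_min _ hgm]
  refine iSup_le fun N => (lintegral_le_poinRHS_of_intervalIntegrable hν hdbl hP hr hsub
    (g := fun t => min (g t) N) (fun t => le_min (hg0 t) N.cast_nonneg)
    (hgm.min measurable_const) fun a b => ?_).trans ?_
  · refine (intervalIntegrable_const (c := (N : ℝ))).mono_fun
      (hgm.min measurable_const).aestronglyMeasurable (ae_of_all _ fun t => ?_)
    simp only [Real.norm_eq_abs, abs_of_nonneg (le_min (hg0 t) N.cast_nonneg), Nat.abs_cast]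
    exact min_le_right _ _
  · gcongr
    exact poinRHS_mono hp _ fun t => ENNReal.ofReal_le_ofReal (min_le_left _ _)

lemma lintegral_le_poinRHS_of_le_two_mul {μ : Measure ℝ} (hν : IsMeasureOnR ν) (hle : ν ≤ μ)
    (hp : 0 ≤ p) (hCd0 : Cd ≠ 0) (hCdt : Cd ≠ ⊤) (hdbl : DoublingWithinC ν Cd B₀)
    (hP : PoincareWithinC ν p C lam B₀) (hlam : 1 ≤ lam) {k : ℕ} (hk : lam ≤ 2 ^ k) {x r : ℝ}
    (hr : 0 < r) (hsub : Ioo (x - 4 ^ (k + 1) * r) (x + 4 ^ (k + 1) * r) ⊆ B₀)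
    (hhalf : μ (Ioo (x - 2 ^ (k + 1) * r) (x + 2 ^ (k + 1) * r)) ≤
      2 * ν (Ioo (x - 2 ^ (k + 1) * r) (x + 2 ^ (k + 1) * r)))
    {g : ℝ → ℝ} (hg0 : ∀ t, 0 ≤ g t) (hgm : Measurable g) :
    ∫⁻ t in Ioo (x - r) (x + r), ENNReal.ofReal (g t) ≤
      lintegralBoundConst Cd C p k * ENNReal.ofReal r *
        PoinRHS μ (fun t => ENNReal.ofReal (g t)) p
          (Ioo (x - 2 ^ (k + 1) * r) (x + 2 ^ (k + 1) * r)) := by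
  have h2k : (1 : ℝ) ≤ 2 ^ k := one_le_pow₀ one_le_two
  have h4k : (4 : ℝ) ^ (k + 1) = 4 * (2 ^ k * 2 ^ k) := by
    rw [← mul_pow, pow_succ]; norm_num; ring
  have hlamk : 2 ^ k * lam ≤ 2 ^ k * 2 ^ k := mul_le_mul_of_nonneg_left hk (by positivity)
  have h1k : 1 ≤ (2 : ℝ) ^ k * 2 ^ k := one_le_mul_of_one_le_of_one_le h2k h2k
  have hνS : ν (Ioo (x - 2 ^ (k + 1) * r) (x + 2 ^ (k + 1) * r)) ≤
      Cd ^ (k + 1) * ν (Ioo (x - lam * (2 * r)) (x + lam * (2 * r))) :=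
    (measure_mono (Ioo_sub_add_subset (by gcongr; nlinarith))).trans
      (hdbl.measure_Ioo_two_pow_mul_le (by positivity) k
        ((Ioo_sub_add_subset (by rw [h4k]; nlinarith)).trans hsub))
  calc ∫⁻ t in Ioo (x - r) (x + r), ENNReal.ofReal (g t)
      ≤ Cd ^ 3 * ENNReal.ofReal (C * (2 * r)) *
          PoinRHS ν (fun t => ENNReal.ofReal (g t)) p
            (Ioo (x - lam * (2 * r)) (x + lam * (2 * r))) :=
        lintegral_le_poinRHS hν hp hdbl hP hr
          ((Ioo_sub_add_subset (by rw [h4k]; nlinarith)).trans hsub) hg0 hgm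
    _ ≤ Cd ^ 3 * ENNReal.ofReal (C * (2 * r)) * ((2 * Cd ^ (k + 1)) ^ (1 / p) *
          PoinRHS μ (fun t => ENNReal.ofReal (g t)) p
            (Ioo (x - 2 ^ (k + 1) * r) (x + 2 ^ (k + 1) * r))) := by
        gcongr
        refine poinRHS_le_rpow_mul hle (Ioo_sub_add_subset (by rw [pow_succ]; nlinarith))
          (mul_ne_zero two_ne_zero (pow_ne_zero _ hCd0))
          (ENNReal.mul_ne_top (by norm_num) (ENNReal.pow_ne_top hCdt)) ?_ hp _
        rw [mul_assoc]
        exact hhalf.trans (by gcongr)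
    _ = _ := by
        rw [show C * (2 * r) = 2 * C * r by ring, ENNReal.ofReal_mul' hr.le, lintegralBoundConst]
        ring

end Poincare

section Sum

variable {μ₁ μ₂ : Measure ℝ} {p C₁ C₂ lam₁ lam₂ : ℝ} {Cd₁ Cd₂ : ℝ≥0∞} {B₀ : Set ℝ}

lemma poinLHS_add_le (hμ₁ : IsMeasureOnR μ₁) (hμ₂ : IsMeasureOnR μ₂) (hp : 0 ≤ p)
    (hCd₁0 : Cd₁ ≠ 0) (hCd₁t : Cd₁ ≠ ⊤) (hD₁ : DoublingWithinC μ₁ Cd₁ B₀)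
    (hCd₂0 : Cd₂ ≠ 0) (hCd₂t : Cd₂ ≠ ⊤) (hD₂ : DoublingWithinC μ₂ Cd₂ B₀)
    (hP₁ : PoincareWithinC μ₁ p C₁ lam₁ B₀) (hP₂ : PoincareWithinC μ₂ p C₂ lam₂ B₀)
    (hlam₁ : 1 ≤ lam₁) (hlam₂ : 1 ≤ lam₂) {k : ℕ} (hk₁ : lam₁ ≤ 2 ^ k) (hk₂ : lam₂ ≤ 2 ^ k)
    {x r : ℝ} (hr : 0 < r) (hsub : Ioo (x - 4 ^ (k + 1) * r) (x + 4 ^ (k + 1) * r) ⊆ B₀)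
    {u g : ℝ → ℝ} (hu : IntegrableOn u (Ioo (x - 2 ^ (k + 1) * r) (x + 2 ^ (k + 1) * r)) (μ₁ + μ₂))
    (hg : IsUpperGradientOn g u (Ioo (x - 2 ^ (k + 1) * r) (x + 2 ^ (k + 1) * r))) :
    PoinLHS (μ₁ + μ₂) u (Ioo (x - r) (x + r)) ≤
      (lintegralBoundConst Cd₁ C₁ p k + lintegralBoundConst Cd₂ C₂ p k) * ENNReal.ofReal r *
        PoinRHS (μ₁ + μ₂) (fun t => ENNReal.ofReal (g t)) p
          (Ioo (x - 2 ^ (k + 1) * r) (x + 2 ^ (k + 1) * r)) := by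
  set S := Ioo (x - 2 ^ (k + 1) * r) (x + 2 ^ (k + 1) * r)
  have hBS : Ioo (x - r) (x + r) ⊆ S :=
    Ioo_sub_add_subset (le_mul_of_one_le_left hr.le (one_le_pow₀ one_le_two))
  obtain ⟨hB0, hBt⟩ := hμ₁.add hμ₂ (x - r) (x + r) (by linarith)
  refine (poinLHS_le_lintegral ordConnected_Ioo hB0.ne' hBt.ne (hu.mono_set hBS)
    (hg.mono hBS)).trans ?_
  rcases le_total (μ₁ S) (μ₂ S) with h | h
  · refine (lintegral_le_poinRHS_of_le_two_mul hμ₂ (Measure.le_add_left le_rfl) hp hCd₂0 hCd₂t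
      hD₂ hP₂ hlam₂ hk₂ hr hsub ?_ hg.1 hg.2.1).trans (by gcongr; exact le_add_self)
    rw [Measure.add_apply, two_mul]
    gcongr
  · refine (lintegral_le_poinRHS_of_le_two_mul hμ₁ (Measure.le_add_right le_rfl) hp hCd₁0 hCd₁t
      hD₁ hP₁ hlam₁ hk₁ hr hsub ?_ hg.1 hg.2.1).trans (by gcongr; exact le_self_add)
    rw [Measure.add_apply, two_mul]
    gcongr

end Sum

lemma AdmissibleWithin.add {μ₁ μ₂ : Measure ℝ} {p x₀ R : ℝ} (hR : 0 < R) (hp : 0 ≤ p)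
    (hμ₁ : IsMeasureOnR μ₁) (hμ₂ : IsMeasureOnR μ₂)
    (h₁ : AdmissibleWithin μ₁ p (Ioo (x₀ - R) (x₀ + R)))
    (h₂ : AdmissibleWithin μ₂ p (Ioo (x₀ - R) (x₀ + R))) :
    ∃ R' > 0, AdmissibleWithin (μ₁ + μ₂) p (Ioo (x₀ - R') (x₀ + R')) := by
  obtain ⟨hD₁, C₁, -, lam₁, hlam₁, hP₁⟩ := h₁
  obtain ⟨hD₂, C₂, -, lam₂, hlam₂, hP₂⟩ := h₂
  obtain ⟨Cd₁, hCd₁0, hCd₁t, hDC₁⟩ := hD₁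
  obtain ⟨Cd₂, hCd₂0, hCd₂t, hDC₂⟩ := hD₂
  obtain ⟨k, hk⟩ := pow_unbounded_of_one_lt (max lam₁ lam₂) one_lt_two
  set T : ℝ := 4 ^ (k + 1)
  have hT : 1 ≤ T := one_le_pow₀ (by norm_num)
  have hsub : Ioo (x₀ - R / T) (x₀ + R / T) ⊆ Ioo (x₀ - R) (x₀ + R) :=
    Ioo_sub_add_subset (div_le_self hR.le hT)
  set E := lintegralBoundConst Cd₁ C₁ p k + lintegralBoundConst Cd₂ C₂ p k
  have hE : E ≤ ENNReal.ofReal (E.toReal + 1) :=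
    (ENNReal.le_ofReal_iff_toReal_le (ENNReal.add_ne_top.2 ⟨lintegralBoundConst_ne_top hCd₁t.ne hp
      C₁ k, lintegralBoundConst_ne_top hCd₂t.ne hp C₂ k⟩) (by positivity)).2 (by linarith)
  refine ⟨R / T, by positivity, (DoublingWithin.add ⟨Cd₁, hCd₁0, hCd₁t, hDC₁⟩
    ⟨Cd₂, hCd₂0, hCd₂t, hDC₂⟩).mono hsub, E.toReal + 1, by positivity, 2 ^ (k + 1),
    one_le_pow₀ one_le_two, fun x r hr hB u g hu hg => ?_⟩
  have hsubT : Ioo (x - T * r) (x + T * r) ⊆ Ioo (x₀ - R) (x₀ + R) := by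
    simpa [mul_div_cancel₀ R (by positivity : T ≠ 0)] using Ioo_sub_add_mul_subset hr hT hB
  calc PoinLHS (μ₁ + μ₂) u (Ioo (x - r) (x + r))
      ≤ E * ENNReal.ofReal r * PoinRHS (μ₁ + μ₂) (fun t => ENNReal.ofReal (g t)) p
          (Ioo (x - 2 ^ (k + 1) * r) (x + 2 ^ (k + 1) * r)) :=
        poinLHS_add_le hμ₁ hμ₂ hp hCd₁0.ne' hCd₁t.ne hDC₁ hCd₂0.ne' hCd₂t.ne hDC₂ hP₁ hP₂ hlam₁
          hlam₂ ((le_max_left _ _).trans hk.le) ((le_max_right _ _).trans hk.le) hr hsubT hu hg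
    _ ≤ ENNReal.ofReal ((E.toReal + 1) * r) * PoinRHS (μ₁ + μ₂) (fun t => ENNReal.ofReal (g t)) p
          (Ioo (x - 2 ^ (k + 1) * r) (x + 2 ^ (k + 1) * r)) := by
        rw [ENNReal.ofReal_mul (by positivity)]
        gcongr

/-- the sum of two locally `p`-admissible measures on ℝ is
locally `p`-admissible. -/
theorem sum_locally_admissible (p : ℝ) (hp : 1 ≤ p) (μ₁ μ₂ : Measure ℝ)
    (hμ₁ : IsMeasureOnR μ₁) (hμ₂ : IsMeasureOnR μ₂)
    (h₁ : LocallyAdmissible μ₁ p) (h₂ : LocallyAdmissible μ₂ p) :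
    LocallyAdmissible (μ₁ + μ₂) p := by
  intro x₀
  obtain ⟨R₁, hR₁, hA₁⟩ := h₁ x₀
  obtain ⟨R₂, hR₂, hA₂⟩ := h₂ x₀
  exact AdmissibleWithin.add (lt_min hR₁ hR₂) (by linarith) hμ₁ hμ₂
    (hA₁.mono (Ioo_sub_add_subset (min_le_left _ _)))
    (hA₂.mono (Ioo_sub_add_subset (min_le_right _ _)))
end

section
/- Let 1 < p < ∞ and let w₁ be a locally p-admissible weight on ℝ. Then w₁^{1/(1−p)} is a locally p/(p−1)-admissible weight on ℝ. -/
open MeasureTheory Set Filter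
open scoped ENNReal NNReal Topology

/-- `w` is a locally `p`-admissible weight on ℝ. -/
def LocallyAdmissibleWeight (p : ℝ) (w : ℝ → ℝ) : Prop :=
  (∀ x, 0 ≤ w x) ∧ MeasureTheory.LocallyIntegrable w volume ∧
  IsMeasureOnR (volume.withDensity fun x => ENNReal.ofReal (w x)) ∧
  LocallyAdmissible (volume.withDensity fun x => ENNReal.ofReal (w x)) p

/-!
Write `μ = w dx` and `ν = w^{1-q} dx` with `q = p/(p-1)`, so that `1 - q = 1/(1-p)`.
Everything rests on the local two-weight Muckenhoupt bound `ν(I)^{1/q} μ(I)^{1/p} ≲ |I|` for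
small intervals `I`.

It comes from the `p`-Poincaré inequality for `μ` on `2I`, tested on the primitive `u` of
`g = 1_I (w + ε)^{1-q}`: `u` vanishes on the left quarter of `2I` and equals `∫_I g` on the right
quarter, both of which carry a fixed fraction of `μ(2I)` by doubling, while `g^p w ≤ g`. This gives
`∫_I g ≲ |I| (∫_I g / μ(I))^{1/p}`, and `ε → 0` yields the bound (and with it `w > 0` a.e.).

Conversely, Hölder's inequality gives `∫_I g ≤ (∫_I g^q dν)^{1/q} μ(I)^{1/p}`. For `g = 1` this
combines with the Muckenhoupt bound into the doubling property of `ν`; for an upper gradient `g` of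
`u` it bounds the oscillation of `u` on `I`, which is the `q`-Poincaré inequality for `ν` with
dilation constant `1`.
-/

theorem DoublingWithinC.measure_le_pow_three_mul {μ : Measure ℝ} {Cd : ℝ≥0∞} {B₀ : Set ℝ}
    (hD : DoublingWithinC μ Cd B₀) {z t : ℝ} (ht : 0 < t)
    (h4 : Ioo (z - 4 * t) (z + 4 * t) ⊆ B₀) {S : Set ℝ} (hS : S ⊆ Ioo (z - 8 * t) (z + 8 * t)) :
    μ S ≤ Cd ^ 3 * μ (Ioo (z - t) (z + t)) := by
  have h2 : Ioo (z - 2 * t) (z + 2 * t) ⊆ B₀ :=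
    (Ioo_subset_Ioo (by linarith) (by linarith)).trans h4
  have h1 : Ioo (z - t) (z + t) ⊆ B₀ := (Ioo_subset_Ioo (by linarith) (by linarith)).trans h4
  have hdouble : ∀ a, 0 < a → Ioo (z - a) (z + a) ⊆ B₀ →
      μ (Ioo (z - 2 * a) (z + 2 * a)) ≤ Cd * μ (Ioo (z - a) (z + a)) := hD z
  calc μ S ≤ μ (Ioo (z - 2 * (4 * t)) (z + 2 * (4 * t))) :=
        measure_mono (hS.trans (Ioo_subset_Ioo (by linarith) (by linarith)))
    _ ≤ Cd * μ (Ioo (z - 2 * (2 * t)) (z + 2 * (2 * t))) := by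
        convert hdouble (4 * t) (by positivity) h4 using 4 <;> ring
    _ ≤ Cd * (Cd * μ (Ioo (z - 2 * t) (z + 2 * t))) := by
        gcongr; exact hdouble (2 * t) (by positivity) h2
    _ ≤ Cd * (Cd * (Cd * μ (Ioo (z - t) (z + t)))) := by
        gcongr; exact hdouble t ht h1
    _ = Cd ^ 3 * μ (Ioo (z - t) (z + t)) := by ring

theorem poinLHS_le_of_forall_ofReal_abs_sub_le {ν : Measure ℝ} {u : ℝ → ℝ} {B : Set ℝ}
    (hB : MeasurableSet B) (hν0 : ν B ≠ 0) (hνT : ν B ≠ ⊤) (hu : IntegrableOn u B ν)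
    {M : ℝ≥0∞} (hosc : ∀ t ∈ B, ∀ t' ∈ B, ENNReal.ofReal |u t' - u t| ≤ M) :
    PoinLHS ν u B ≤ M := by
  rcases eq_or_ne M ⊤ with rfl | hM
  · exact le_top
  have havg : ∀ t ∈ B, ENNReal.ofReal |u t - ⨍ s in B, u s ∂ν| ≤ M := by
    intro t ht
    have hmem : (⨍ s in B, u s ∂ν) ∈ Metric.closedBall (u t) M.toReal :=
      (convex_closedBall _ _).set_average_mem Metric.isClosed_closedBall hν0 hνT
        (ae_restrict_of_forall_mem hB fun s hs =>
          (ENNReal.ofReal_le_iff_le_toReal hM).mp (hosc t ht s hs)) hu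
    rw [Metric.mem_closedBall, Real.dist_eq, abs_sub_comm] at hmem
    exact (ENNReal.ofReal_le_iff_le_toReal hM).mpr hmem
  rw [PoinLHS, ENNReal.div_le_iff hν0 hνT]
  calc ∫⁻ t in B, ENNReal.ofReal |u t - ⨍ s in B, u s ∂ν| ∂ν ≤ ∫⁻ _ in B, M ∂ν :=
        setLIntegral_mono' hB havg
    _ = M * ν B := setLIntegral_const _ _

theorem ofReal_abs_sub_le_mul_poinLHS {μ : Measure ℝ} {u : ℝ → ℝ} {B L R : Set ℝ} {a b : ℝ}
    {D : ℝ≥0∞} (hLB : L ⊆ B) (hRB : R ⊆ B) (hLR : Disjoint L R) (hL : MeasurableSet L)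
    (hR : MeasurableSet R) (hBL : μ B ≤ D * μ L) (hBR : μ B ≤ D * μ R)
    (huL : ∀ t ∈ L, u t = a) (huR : ∀ t ∈ R, u t = b) (hB0 : μ B ≠ 0) (hBT : μ B ≠ ⊤) :
    ENNReal.ofReal |b - a| ≤ D * PoinLHS μ u B := by
  set m := ⨍ s in B, u s ∂μ
  have hconst : ∀ {S : Set ℝ} {c : ℝ}, MeasurableSet S → (∀ t ∈ S, u t = c) →
      ∫⁻ t in S, ENNReal.ofReal |u t - m| ∂μ = ENNReal.ofReal |c - m| * μ S := by
    intro S c hS huS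
    rw [setLIntegral_congr_fun hS fun t ht => by rw [huS t ht], setLIntegral_const]
  have htri : ENNReal.ofReal |b - a| ≤ ENNReal.ofReal |a - m| + ENNReal.ofReal |b - m| := by
    refine (ENNReal.ofReal_le_ofReal ?_).trans ENNReal.ofReal_add_le
    calc |b - a| ≤ |b - m| + |m - a| := abs_sub_le b m a
      _ = |a - m| + |b - m| := by rw [abs_sub_comm m a, add_comm]
  rw [PoinLHS, ← mul_div_assoc, ENNReal.le_div_iff_mul_le (Or.inl hB0) (Or.inl hBT)]
  calc ENNReal.ofReal |b - a| * μ B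
      ≤ ENNReal.ofReal |a - m| * μ B + ENNReal.ofReal |b - m| * μ B := by
        rw [← add_mul]; gcongr
    _ ≤ ENNReal.ofReal |a - m| * (D * μ L) + ENNReal.ofReal |b - m| * (D * μ R) := by gcongr
    _ = D * ∫⁻ t in L ∪ R, ENNReal.ofReal |u t - m| ∂μ := by
        rw [lintegral_union hR hLR, hconst hL huL, hconst hR huR]; ring
    _ ≤ D * ∫⁻ t in B, ENNReal.ofReal |u t - m| ∂μ := by
        gcongr; exact union_subset hLB hRB

theorem ENNReal.rpow_mul_rpow_le_of_le_mul_div_rpow {p q : ℝ} (hpq : p.HolderConjugate q)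
    {A m M : ℝ≥0∞} (hAT : A ≠ ⊤) (hm0 : m ≠ 0) (hmT : m ≠ ⊤) (h : A ≤ M * (A / m) ^ (1 / p)) :
    A ^ (1 / q) * m ^ (1 / p) ≤ M := by
  rcases eq_or_ne A 0 with rfl | hA0
  · rw [ENNReal.zero_rpow_of_pos hpq.symm.one_div_pos, zero_mul]
    exact zero_le
  have hsplit : A = A ^ (1 / q) * A ^ (1 / p) := by
    rw [← ENNReal.rpow_add _ _ hA0 hAT, hpq.symm.one_div_add_one_div, div_one, ENNReal.rpow_one]
  have hAp0 : A ^ (1 / p) ≠ 0 := (ENNReal.rpow_pos (pos_iff_ne_zero.mpr hA0) hAT).ne'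
  have hApT : A ^ (1 / p) ≠ ⊤ := ENNReal.rpow_ne_top_of_nonneg hpq.one_div_nonneg hAT
  have hmp0 : m ^ (1 / p) ≠ 0 := (ENNReal.rpow_pos (pos_iff_ne_zero.mpr hm0) hmT).ne'
  have hmpT : m ^ (1 / p) ≠ ⊤ := ENNReal.rpow_ne_top_of_nonneg hpq.one_div_nonneg hmT
  rw [ENNReal.div_rpow_of_nonneg _ _ hpq.one_div_nonneg] at h
  rw [← ENNReal.le_div_iff_mul_le (Or.inl hmp0) (Or.inl hmpT),
    ← ENNReal.mul_le_mul_iff_left hAp0 hApT, ← hsplit]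
  calc A ≤ M * (A ^ (1 / p) / m ^ (1 / p)) := h
    _ = M / m ^ (1 / p) * A ^ (1 / p) := by simp only [div_eq_mul_inv]; ring

/-- Meaningful only when `∫ g < ∞` (`toReal ⊤ = 0`). -/
noncomputable def lintegralPrimitive (g : ℝ → ℝ) (t : ℝ) : ℝ :=
  (∫⁻ x in Iio t, ENNReal.ofReal (g x)).toReal

section lintegralPrimitive

variable {g : ℝ → ℝ}

theorem lintegralPrimitive_mono (hfin : ∫⁻ x, ENNReal.ofReal (g x) ≠ ⊤) :
    Monotone (lintegralPrimitive g) := fun _ _ hab =>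
  ENNReal.toReal_mono (ne_top_of_le_ne_top hfin (setLIntegral_le_lintegral _ _))
    (lintegral_mono_set (Iio_subset_Iio hab))

theorem lintegralPrimitive_le (t : ℝ) (hfin : ∫⁻ x, ENNReal.ofReal (g x) ≠ ⊤) :
    lintegralPrimitive g t ≤ (∫⁻ x, ENNReal.ofReal (g x)).toReal :=
  ENNReal.toReal_mono hfin (setLIntegral_le_lintegral _ _)

theorem lintegralPrimitive_integrableOn {μ : Measure ℝ} {s : Set ℝ} (hμs : μ s ≠ ⊤)
    (hfin : ∫⁻ x, ENNReal.ofReal (g x) ≠ ⊤) : IntegrableOn (lintegralPrimitive g) s μ :=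
  Measure.integrableOn_of_bounded hμs
    (lintegralPrimitive_mono hfin).measurable.aestronglyMeasurable
    (ae_of_all _ fun t => by
      rw [lintegralPrimitive, Real.norm_of_nonneg ENNReal.toReal_nonneg]
      exact lintegralPrimitive_le t hfin)

theorem lintegralPrimitive_eq_zero {t : ℝ} (h : ∀ x < t, g x = 0) : lintegralPrimitive g t = 0 := by
  rw [lintegralPrimitive, setLIntegral_congr_fun measurableSet_Iio
    (fun x hx => by rw [h x hx, ENNReal.ofReal_zero]), lintegral_zero, ENNReal.toReal_zero]

theorem lintegralPrimitive_eq_lintegral {t : ℝ} (h : ∀ x ≥ t, g x = 0) :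
    lintegralPrimitive g t = (∫⁻ x, ENNReal.ofReal (g x)).toReal := by
  have hzero : ∫⁻ x in (Iio t)ᶜ, ENNReal.ofReal (g x) = 0 := by
    rw [setLIntegral_congr_fun measurableSet_Iio.compl
      (fun x hx => by rw [h x (not_lt.mp hx), ENNReal.ofReal_zero]), lintegral_zero]
  rw [lintegralPrimitive, ← lintegral_add_compl (μ := volume) _ (measurableSet_Iio (a := t)), hzero,
    add_zero]

theorem isUpperGradientOn_lintegralPrimitive (hg0 : ∀ x, 0 ≤ g x) (hgm : Measurable g)
    (hfin : ∫⁻ x, ENNReal.ofReal (g x) ≠ ⊤) (J : Set ℝ) :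
    IsUpperGradientOn g (lintegralPrimitive g) J := by
  refine ⟨hg0, hgm, fun a b hab _ => ?_⟩
  have hsplit : ∫⁻ x in Iio b, ENNReal.ofReal (g x)
      = (∫⁻ x in Iio a, ENNReal.ofReal (g x)) + ∫⁻ x in Ico a b, ENNReal.ofReal (g x) := by
    rw [← lintegral_union measurableSet_Ico
      (disjoint_left.mpr fun x (hx : x ∈ Iio a) hx' => not_lt.mpr hx'.1 hx),
      Iio_union_Ico_eq_Iio hab]
  have hfin' : ∀ s, ∫⁻ x in s, ENNReal.ofReal (g x) ≠ ⊤ := fun s =>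
    ne_top_of_le_ne_top hfin (setLIntegral_le_lintegral _ _)
  have hdiff : lintegralPrimitive g b - lintegralPrimitive g a
      = (∫⁻ x in Ico a b, ENNReal.ofReal (g x)).toReal := by
    rw [lintegralPrimitive, lintegralPrimitive, hsplit,
      ENNReal.toReal_add (hfin' (Iio a)) (hfin' (Ico a b))]
    ring
  rw [hdiff, abs_of_nonneg ENNReal.toReal_nonneg, ENNReal.ofReal_toReal (hfin' _)]
  exact lintegral_mono_set Ico_subset_Icc_self

end lintegralPrimitive

theorem lintegral_rpow_mul_measure_rpow_le_of_poincare {μ : Measure ℝ} {p q : ℝ}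
    (hpq : p.HolderConjugate q) {Cd : ℝ≥0∞} {CP lam : ℝ} {B₀ : Set ℝ} (hμ : IsMeasureOnR μ)
    (hD : DoublingWithinC μ Cd B₀) (hP : PoincareWithinC μ p CP lam B₀) (hlam : 1 ≤ lam)
    {c s : ℝ} (hs : 0 < s) (hB₀ : Ioo (c - 4 * s) (c + 4 * s) ⊆ B₀) {g : ℝ → ℝ}
    (hg0 : ∀ x, 0 ≤ g x) (hgm : Measurable g) (hg_supp : ∀ x ∉ Ioo (c - s) (c + s), g x = 0)
    (hgT : ∫⁻ x, ENNReal.ofReal (g x) ≠ ⊤)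
    (hgp : ∫⁻ x, ENNReal.ofReal (g x) ^ p ∂μ ≤ ∫⁻ x, ENNReal.ofReal (g x)) :
    (∫⁻ x, ENNReal.ofReal (g x)) ^ (1 / q) * μ (Ioo (c - s) (c + s)) ^ (1 / p) ≤
      Cd ^ 3 * ENNReal.ofReal (CP * (2 * s)) := by
  set A := ∫⁻ x, ENNReal.ofReal (g x)
  set I := Ioo (c - s) (c + s)
  set B := Ioo (c - 2 * s) (c + 2 * s)
  set J := Ioo (c - lam * (2 * s)) (c + lam * (2 * s))
  have hIJ : I ⊆ J := Ioo_subset_Ioo (by nlinarith) (by nlinarith)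
  have hJT : μ J ≠ ⊤ := (hμ _ _ (by nlinarith)).2.ne
  have hB0 : μ B ≠ 0 := (hμ _ _ (by linarith)).1.ne'
  have hBT : μ B ≠ ⊤ := (hμ _ _ (by linarith)).2.ne
  -- `L` and `R` are the outer quarters `(c - 2s, c - s)` and `(c + s, c + 2s)` of `B`, written as
  -- balls of radius `s/2` to apply the doubling estimate.
  have hlower : A ≤ Cd ^ 3 * PoinLHS μ (lintegralPrimitive g) B := by
    have h := ofReal_abs_sub_le_mul_poinLHS (μ := μ) (u := lintegralPrimitive g) (a := 0)
      (b := A.toReal) (L := Ioo (c - 3 / 2 * s - s / 2) (c - 3 / 2 * s + s / 2))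
      (R := Ioo (c + 3 / 2 * s - s / 2) (c + 3 / 2 * s + s / 2))
      (Ioo_subset_Ioo (by linarith) (by linarith)) (Ioo_subset_Ioo (by linarith) (by linarith))
      (disjoint_left.mpr fun x hx hx' => by linarith [hx.2, hx'.1])
      measurableSet_Ioo measurableSet_Ioo
      (hD.measure_le_pow_three_mul (by positivity) (Ioo_subset_Ioo (by linarith) (by linarith)
        |>.trans hB₀) (Ioo_subset_Ioo (by linarith) (by linarith)))
      (hD.measure_le_pow_three_mul (by positivity) (Ioo_subset_Ioo (by linarith) (by linarith)
        |>.trans hB₀) (Ioo_subset_Ioo (by linarith) (by linarith)))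
      (fun t ht => lintegralPrimitive_eq_zero fun x hx => hg_supp x fun hxI => by
        linarith [hxI.1, ht.2])
      (fun t ht => lintegralPrimitive_eq_lintegral fun x hx => hg_supp x fun hxI => by
        linarith [hxI.2, ht.1])
      hB0 hBT
    rwa [sub_zero, abs_of_nonneg ENNReal.toReal_nonneg, ENNReal.ofReal_toReal hgT] at h
  have hPoin := hP c (2 * s) (by positivity)
    ((Ioo_subset_Ioo (by linarith) (by linarith)).trans hB₀) (lintegralPrimitive g) g
    (lintegralPrimitive_integrableOn hJT hgT) (isUpperGradientOn_lintegralPrimitive hg0 hgm hgT J)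
  have hupper : PoinRHS μ (fun t => ENNReal.ofReal (g t)) p J ≤ (A / μ I) ^ (1 / p) :=
    ENNReal.rpow_le_rpow (ENNReal.div_le_div ((setLIntegral_le_lintegral _ _).trans hgp)
      (measure_mono hIJ)) hpq.one_div_nonneg
  refine ENNReal.rpow_mul_rpow_le_of_le_mul_div_rpow hpq hgT (hμ _ _ (by linarith)).1.ne'
    (hμ _ _ (by linarith)).2.ne ?_
  calc A ≤ Cd ^ 3 * PoinLHS μ (lintegralPrimitive g) B := hlower
    _ ≤ Cd ^ 3 * (ENNReal.ofReal (CP * (2 * s)) * (A / μ I) ^ (1 / p)) := by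
        gcongr; exact hPoin.trans (by gcongr)
    _ = Cd ^ 3 * ENNReal.ofReal (CP * (2 * s)) * (A / μ I) ^ (1 / p) := (mul_assoc _ _ _).symm

theorem ofReal_mul_ofReal_rpow_rpow_le {w ε e p : ℝ} (hw : 0 ≤ w) (hε : 0 < ε) (hp : 0 ≤ p)
    (he : e * p + 1 = e) :
    ENNReal.ofReal w * ENNReal.ofReal ((w + ε) ^ e) ^ p ≤ ENNReal.ofReal ((w + ε) ^ e) := by
  have hb : 0 < w + ε := by linarith
  rw [ENNReal.ofReal_rpow_of_nonneg (Real.rpow_nonneg hb.le _) hp, ← Real.rpow_mul hb.le,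
    ← ENNReal.ofReal_mul hw]
  refine ENNReal.ofReal_le_ofReal ?_
  calc w * (w + ε) ^ (e * p) ≤ (w + ε) * (w + ε) ^ (e * p) := by gcongr; linarith
    _ = (w + ε) ^ (e * p + 1) := by rw [Real.rpow_add hb, Real.rpow_one, mul_comm]
    _ = (w + ε) ^ e := by rw [he]

theorem monotone_ofReal_rpow_add_one_div {a e : ℝ} (ha : 0 ≤ a) (he : e ≤ 0) :
    Monotone fun k : ℕ => ENNReal.ofReal ((a + 1 / (k + 1)) ^ e) := fun k l hkl =>
  ENNReal.ofReal_le_ofReal (Real.rpow_le_rpow_of_nonpos (by positivity)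
    (by gcongr) he)

theorem iSup_ofReal_rpow_add_one_div {a e : ℝ} (ha : 0 ≤ a) (he : e ≤ 0) :
    ⨆ k : ℕ, ENNReal.ofReal ((a + 1 / (k + 1)) ^ e) = ENNReal.ofReal a ^ e := by
  refine iSup_eq_of_tendsto (monotone_ofReal_rpow_add_one_div ha he) ?_
  have hconv : Filter.Tendsto (fun k : ℕ => ENNReal.ofReal (a + 1 / (k + 1))) atTop
      (𝓝 (ENNReal.ofReal a)) := by
    have h := (tendsto_const_nhds (x := a)).add (tendsto_one_div_add_atTop_nhds_zero_nat (𝕜 := ℝ))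
    rw [add_zero] at h
    exact (ENNReal.continuous_ofReal.tendsto a).comp h
  refine ((ENNReal.continuous_rpow_const.tendsto _).comp hconv).congr fun k => ?_
  exact ENNReal.ofReal_rpow_of_pos (by positivity)

/-- The two-weight Muckenhoupt condition `ν(I)^{1/q} μ(I)^{1/p} ≤ C r` on the balls
`I = B(x, r) ⊆ B₀`. For `μ = w dx` and `ν = w^{1-q} dx` it is the `A_p` condition
`⨍_I w (⨍_I w^{1-q})^{p-1} ≤ (C/2)^p` with the divisions cleared. -/
def ApPairWithin (μ ν : Measure ℝ) (p q C : ℝ) (B₀ : Set ℝ) : Prop :=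
  ∀ x r : ℝ, 0 < r → Ioo (x - r) (x + r) ⊆ B₀ →
    ν (Ioo (x - r) (x + r)) ^ (1 / q) * μ (Ioo (x - r) (x + r)) ^ (1 / p) ≤ ENNReal.ofReal (C * r)

section TestFunction

variable {p q : ℝ} {w : ℝ → ℝ} {μ : Measure ℝ} {Cd : ℝ≥0∞} {CP lam : ℝ}

theorem setLIntegral_ofReal_rpow_add_mul_measure_rpow_le (hpq : p.HolderConjugate q)
    (hw0 : ∀ x, 0 ≤ w x) (hwm : Measurable w)
    (hμw : μ = volume.withDensity fun x => ENNReal.ofReal (w x)) {B₀ : Set ℝ}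
    (hμ : IsMeasureOnR μ) (hD : DoublingWithinC μ Cd B₀) (hP : PoincareWithinC μ p CP lam B₀)
    (hlam : 1 ≤ lam) {c s : ℝ} (hs : 0 < s) (hB₀ : Ioo (c - 4 * s) (c + 4 * s) ⊆ B₀)
    {ε : ℝ} (hε : 0 < ε) :
    (∫⁻ x in Ioo (c - s) (c + s), ENNReal.ofReal ((w x + ε) ^ (1 - q))) ^ (1 / q) *
      μ (Ioo (c - s) (c + s)) ^ (1 / p) ≤ Cd ^ 3 * ENNReal.ofReal (CP * (2 * s)) := by
  set I := Ioo (c - s) (c + s)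
  set f : ℝ → ℝ := fun x => (w x + ε) ^ (1 - q)
  have hf0 : ∀ x, 0 ≤ f x := fun x => Real.rpow_nonneg (by linarith [hw0 x]) _
  have hfm : Measurable f := (hwm.add_const ε).pow_const _
  have hind : ∀ x,
      ENNReal.ofReal (I.indicator f x) = I.indicator (fun x => ENNReal.ofReal (f x)) x :=
    fun x => by by_cases hx : x ∈ I <;> simp [hx]
  have hA : ∫⁻ x, ENNReal.ofReal (I.indicator f x) = ∫⁻ x in I, ENNReal.ofReal (f x) := by
    simp_rw [hind]; exact lintegral_indicator measurableSet_Ioo _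
  rw [← hA]
  refine lintegral_rpow_mul_measure_rpow_le_of_poincare (g := I.indicator f) hpq hμ hD hP hlam hs
    hB₀ (indicator_nonneg fun x _ => hf0 x) (hfm.indicator measurableSet_Ioo)
    (fun x hx => indicator_of_notMem hx f) ?_ ?_
  · have hbound : ∫⁻ x in I, ENNReal.ofReal (f x) ≤ ENNReal.ofReal (ε ^ (1 - q)) * volume I :=
      calc ∫⁻ x in I, ENNReal.ofReal (f x) ≤ ∫⁻ _ in I, ENNReal.ofReal (ε ^ (1 - q)) :=
            setLIntegral_mono' measurableSet_Ioo fun x _ => ENNReal.ofReal_le_ofReal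
              (Real.rpow_le_rpow_of_nonpos hε (by linarith [hw0 x]) (by linarith [hpq.symm.lt]))
        _ = ENNReal.ofReal (ε ^ (1 - q)) * volume I := setLIntegral_const _ _
    rw [hA]
    exact ne_top_of_le_ne_top (ENNReal.mul_ne_top ENNReal.ofReal_ne_top
      (by simp [I, Real.volume_Ioo])) hbound
  · rw [hμw, lintegral_withDensity_eq_lintegral_mul _ hwm.ennreal_ofReal
      ((hfm.indicator (s := I) measurableSet_Ioo).ennreal_ofReal.pow_const p)]
    refine lintegral_mono fun x => ?_
    by_cases hx : x ∈ I
    · rw [Pi.mul_apply, indicator_of_mem hx]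
      exact ofReal_mul_ofReal_rpow_rpow_le (e := 1 - q) (hw0 x) hε hpq.nonneg
        (by linear_combination (-1 : ℝ) * hpq.mul_eq_add)
    · rw [Pi.mul_apply, indicator_of_notMem hx, ENNReal.ofReal_zero,
        ENNReal.zero_rpow_of_pos hpq.pos, mul_zero]

theorem apPairWithin_of_doublingWithinC_of_poincareWithinC (hpq : p.HolderConjugate q)
    (hw0 : ∀ x, 0 ≤ w x) (hwm : Measurable w)
    (hμw : μ = volume.withDensity fun x => ENNReal.ofReal (w x)) {y R : ℝ}
    (hμ : IsMeasureOnR μ) (hCd : Cd ≠ ⊤) (hD : DoublingWithinC μ Cd (Ioo (y - R) (y + R)))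
    (hP : PoincareWithinC μ p CP lam (Ioo (y - R) (y + R))) (hlam : 1 ≤ lam) :
    ApPairWithin μ (volume.withDensity fun x => ENNReal.ofReal (w x) ^ (1 - q)) p q
      (Cd.toReal ^ 3 * (2 * CP)) (Ioo (y - R / 4) (y + R / 4)) := by
  intro c s hs hsub
  obtain ⟨h1, h2⟩ := (Ioo_subset_Ioo_iff (by linarith)).mp hsub
  have hB₀ : Ioo (c - 4 * s) (c + 4 * s) ⊆ Ioo (y - R) (y + R) :=
    Ioo_subset_Ioo (by linarith) (by linarith)
  have hq : 1 - q ≤ 0 := by linarith [hpq.symm.lt]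
  have hlim : ∫⁻ x in Ioo (c - s) (c + s), ENNReal.ofReal (w x) ^ (1 - q) =
      ⨆ k : ℕ, ∫⁻ x in Ioo (c - s) (c + s), ENNReal.ofReal ((w x + 1 / (k + 1)) ^ (1 - q)) := by
    rw [← lintegral_iSup (f := fun (k : ℕ) x => ENNReal.ofReal ((w x + 1 / (k + 1)) ^ (1 - q)))
      (fun k => ENNReal.measurable_ofReal.comp ((hwm.add_const _).pow_const _))
      (fun k l hkl x => monotone_ofReal_rpow_add_one_div (hw0 x) hq hkl)]
    exact lintegral_congr fun x => (iSup_ofReal_rpow_add_one_div (hw0 x) hq).symm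
  have hCd' : Cd = ENNReal.ofReal Cd.toReal := (ENNReal.ofReal_toReal hCd).symm
  rw [withDensity_apply _ measurableSet_Ioo, hlim,
    Monotone.map_iSup_of_continuousAt ENNReal.continuous_rpow_const.continuousAt
      (ENNReal.monotone_rpow_of_nonneg hpq.symm.one_div_nonneg)
      (ENNReal.zero_rpow_of_pos hpq.symm.one_div_pos), ENNReal.iSup_mul]
  refine iSup_le fun k => (setLIntegral_ofReal_rpow_add_mul_measure_rpow_le hpq hw0 hwm hμw hμ
    hD hP hlam hs hB₀ (by positivity)).trans (le_of_eq ?_)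
  conv_lhs => rw [hCd']
  rw [← ENNReal.ofReal_pow ENNReal.toReal_nonneg, ← ENNReal.ofReal_mul (by positivity)]
  congr 1
  ring

end TestFunction

theorem setLIntegral_le_lintegral_rpow_withDensity_mul {α : Type*} [MeasurableSpace α]
    {m : Measure α} {p q : ℝ} (hpq : p.HolderConjugate q) {W : α → ℝ≥0∞} (hW : Measurable W)
    (hW0 : ∀ᵐ x ∂m, W x ≠ 0) (hWT : ∀ᵐ x ∂m, W x ≠ ⊤) {s : Set α} (hs : MeasurableSet s)
    {g : α → ℝ≥0∞} (hg : Measurable g) :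
    ∫⁻ x in s, g x ∂m ≤
      (∫⁻ x in s, g x ^ q ∂m.withDensity fun x => W x ^ (1 - q)) ^ (1 / q) *
        m.withDensity W s ^ (1 / p) := by
  have key := ENNReal.lintegral_mul_le_Lp_mul_Lq (m.restrict s) hpq.symm
    (f := fun x => g x * W x ^ (-(1 / p))) (g := fun x => W x ^ (1 / p))
    (hg.mul (hW.pow_const _)).aemeasurable (hW.pow_const _).aemeasurable
  have hprod : ∫⁻ x in s, g x * W x ^ (-(1 / p)) * W x ^ (1 / p) ∂m = ∫⁻ x in s, g x ∂m := by
    refine lintegral_congr_ae ?_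
    filter_upwards [ae_restrict_of_ae hW0, ae_restrict_of_ae hWT] with x h0 hT
    rw [mul_assoc, ← ENNReal.rpow_add _ _ h0 hT, neg_add_cancel, ENNReal.rpow_zero, mul_one]
  have hexp : -(1 / p) * q = 1 - q := by
    field_simp [hpq.ne_zero]
    linear_combination hpq.mul_eq_add
  have hfirst : ∫⁻ x in s, (g x * W x ^ (-(1 / p))) ^ q ∂m =
      ∫⁻ x in s, g x ^ q ∂m.withDensity fun x => W x ^ (1 - q) := by
    rw [setLIntegral_withDensity_eq_setLIntegral_mul _ (hW.pow_const _) (hg.pow_const _) hs]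
    refine lintegral_congr fun x => ?_
    rw [ENNReal.mul_rpow_of_nonneg _ _ hpq.symm.nonneg, ← ENNReal.rpow_mul, hexp, Pi.mul_apply,
      mul_comm]
  have hsecond : ∫⁻ x in s, (W x ^ (1 / p)) ^ p ∂m = m.withDensity W s := by
    rw [withDensity_apply _ hs]
    refine lintegral_congr fun x => ?_
    rw [← ENNReal.rpow_mul, one_div_mul_cancel hpq.ne_zero, ENNReal.rpow_one]
  simpa only [Pi.mul_apply, hprod, hfirst, hsecond] using key

theorem IsUpperGradientOn.ofReal_abs_sub_le_setLIntegral {g u : ℝ → ℝ} {J : Set ℝ}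
    (hg : IsUpperGradientOn g u J) (hJ : J.OrdConnected) {t t' : ℝ} (ht : t ∈ J) (ht' : t' ∈ J) :
    ENNReal.ofReal |u t' - u t| ≤ ∫⁻ x in J, ENNReal.ofReal (g x) := by
  wlog h : t ≤ t' generalizing t t'
  · rw [abs_sub_comm]
    exact this ht' ht (le_of_not_ge h)
  exact (hg.2.2 t t' h (hJ.out ht ht')).trans (lintegral_mono_set (hJ.out ht ht'))

namespace ApPairWithin

variable {μ ν : Measure ℝ} {p q C : ℝ}

theorem mono {B₀ B₁ : Set ℝ} (hA : ApPairWithin μ ν p q C B₀) (h : B₁ ⊆ B₀) :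
    ApPairWithin μ ν p q C B₁ := fun x r hr hsub => hA x r hr (hsub.trans h)

theorem measure_lt_top (hpq : p.HolderConjugate q) {B₀ : Set ℝ}
    (hA : ApPairWithin μ ν p q C B₀) (hμ : IsMeasureOnR μ) {x r : ℝ} (hr : 0 < r)
    (hsub : Ioo (x - r) (x + r) ⊆ B₀) : ν (Ioo (x - r) (x + r)) < ⊤ := by
  by_contra htop
  have h := hA x r hr hsub
  rw [not_lt, top_le_iff] at htop
  rw [htop, ENNReal.top_rpow_of_pos hpq.symm.one_div_pos, ENNReal.top_mul
    (ENNReal.rpow_pos (hμ _ _ (by linarith)).1 (hμ _ _ (by linarith)).2.ne).ne', top_le_iff] at h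
  exact ENNReal.ofReal_ne_top h

theorem doublingWithinC (hpq : p.HolderConjugate q) {y R : ℝ}
    (hA : ApPairWithin μ ν p q C (Ioo (y - R) (y + R))) (hμ : IsMeasureOnR μ)
    (hvol : ∀ a b, volume (Ioo a b) ≤ ν (Ioo a b) ^ (1 / q) * μ (Ioo a b) ^ (1 / p)) :
    DoublingWithinC ν (ENNReal.ofReal C ^ q) (Ioo (y - R / 2) (y + R / 2)) := by
  intro x r hr hsub
  obtain ⟨h1, h2⟩ := (Ioo_subset_Ioo_iff (by linarith)).mp hsub
  set I := Ioo (x - r) (x + r)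
  set I₂ := Ioo (x - 2 * r) (x + 2 * r)
  have hII₂ : I ⊆ I₂ := Ioo_subset_Ioo (by linarith) (by linarith)
  have hμ0 : μ I₂ ^ (1 / p) ≠ 0 := (ENNReal.rpow_pos (hμ _ _ (by linarith)).1
    (hμ _ _ (by linarith)).2.ne).ne'
  have hμT : μ I₂ ^ (1 / p) ≠ ⊤ :=
    ENNReal.rpow_ne_top_of_nonneg hpq.one_div_nonneg (hμ _ _ (by linarith)).2.ne
  have hroot : ν I₂ ^ (1 / q) ≤ ENNReal.ofReal C * ν I ^ (1 / q) := by
    rw [← ENNReal.mul_le_mul_iff_left hμ0 hμT]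
    calc ν I₂ ^ (1 / q) * μ I₂ ^ (1 / p) ≤ ENNReal.ofReal (C * (2 * r)) :=
          hA x (2 * r) (by positivity) (Ioo_subset_Ioo (by linarith) (by linarith))
      _ = ENNReal.ofReal C * volume I := by
          rw [Real.volume_Ioo, ← ENNReal.ofReal_mul' (by linarith : (0 : ℝ) ≤ x + r - (x - r))]
          ring_nf
      _ ≤ ENNReal.ofReal C * (ν I ^ (1 / q) * μ I₂ ^ (1 / p)) := by
          gcongr
          exact (hvol (x - r) (x + r)).trans (by gcongr; exact hpq.one_div_nonneg)
      _ = ENNReal.ofReal C * ν I ^ (1 / q) * μ I₂ ^ (1 / p) := (mul_assoc _ _ _).symm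
  have hq : (1 / q) * q = 1 := one_div_mul_cancel hpq.symm.ne_zero
  calc ν I₂ = (ν I₂ ^ (1 / q)) ^ q := by rw [← ENNReal.rpow_mul, hq, ENNReal.rpow_one]
    _ ≤ (ENNReal.ofReal C * ν I ^ (1 / q)) ^ q := ENNReal.rpow_le_rpow hroot hpq.symm.nonneg
    _ = ENNReal.ofReal C ^ q * ν I := by
        rw [ENNReal.mul_rpow_of_nonneg _ _ hpq.symm.nonneg, ← ENNReal.rpow_mul, hq,
          ENNReal.rpow_one]

theorem poincareWithinC (hpq : p.HolderConjugate q) {B₀ : Set ℝ}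
    (hA : ApPairWithin μ ν p q C B₀) (hν : IsMeasureOnR ν)
    (hHolder : ∀ a b (g : ℝ → ℝ≥0∞), Measurable g →
      ∫⁻ x in Ioo a b, g x ≤ (∫⁻ x in Ioo a b, g x ^ q ∂ν) ^ (1 / q) * μ (Ioo a b) ^ (1 / p)) :
    PoincareWithinC ν q C 1 B₀ := by
  intro x r hr hsub u g hu hg
  simp only [one_mul] at hu hg ⊢
  set I := Ioo (x - r) (x + r)
  set G := ∫⁻ t in I, ENNReal.ofReal (g t) ^ q ∂ν
  have hν0 : ν I ≠ 0 := (hν _ _ (by linarith)).1.ne'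
  have hνT : ν I ≠ ⊤ := (hν _ _ (by linarith)).2.ne
  have hνq0 : ν I ^ (1 / q) ≠ 0 := (ENNReal.rpow_pos (pos_iff_ne_zero.mpr hν0) hνT).ne'
  have hνqT : ν I ^ (1 / q) ≠ ⊤ := ENNReal.rpow_ne_top_of_nonneg hpq.symm.one_div_nonneg hνT
  have hosc : ∀ t ∈ I, ∀ t' ∈ I, ENNReal.ofReal |u t' - u t| ≤ G ^ (1 / q) * μ I ^ (1 / p) :=
    fun t ht t' ht' => (hg.ofReal_abs_sub_le_setLIntegral ordConnected_Ioo ht ht').trans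
      (hHolder _ _ _ hg.2.1.ennreal_ofReal)
  refine (poinLHS_le_of_forall_ofReal_abs_sub_le measurableSet_Ioo hν0 hνT hu hosc).trans ?_
  rw [PoinRHS, ENNReal.div_rpow_of_nonneg _ _ hpq.symm.one_div_nonneg]
  calc G ^ (1 / q) * μ I ^ (1 / p)
        = G ^ (1 / q) / ν I ^ (1 / q) * (ν I ^ (1 / q) * μ I ^ (1 / p)) := by
        rw [← mul_assoc, ENNReal.div_mul_cancel hνq0 hνqT]
    _ ≤ G ^ (1 / q) / ν I ^ (1 / q) * ENNReal.ofReal (C * r) := by gcongr; exact hA x r hr hsub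
    _ = ENNReal.ofReal (C * r) * (G ^ (1 / q) / ν I ^ (1 / q)) := mul_comm _ _

end ApPairWithin

theorem ae_lt_top_of_isLocallyFiniteMeasure_withDensity {α : Type*} [TopologicalSpace α]
    [SecondCountableTopology α] [MeasurableSpace α] {μ : Measure α} {f : α → ℝ≥0∞}
    (hf : Measurable f) [IsLocallyFiniteMeasure (μ.withDensity f)] : ∀ᵐ x ∂μ, f x < ⊤ := by
  rw [ae_iff]
  refine measure_null_of_locally_null _ fun x _ => ?_
  obtain ⟨u, hu, huT⟩ := (μ.withDensity f).finiteAt_nhds x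
  refine ⟨{x | ¬f x < ⊤} ∩ u, inter_mem_nhdsWithin _ hu, ?_⟩
  have h := ae_lt_top' hf.aemeasurable.restrict ((withDensity_apply_le f u).trans_lt huT).ne
  rwa [ae_iff, Measure.restrict_apply
    (show MeasurableSet {a | ¬f a < ⊤} from (measurableSet_lt hf measurable_const).compl)] at h

theorem locallyIntegrable_of_isLocallyFiniteMeasure_withDensity {α : Type*} [TopologicalSpace α]
    [MeasurableSpace α] {μ : Measure α} {f : α → ℝ} (hf : AEStronglyMeasurable f μ)
    (hf0 : ∀ x, 0 ≤ f x) [IsLocallyFiniteMeasure (μ.withDensity fun x => ENNReal.ofReal (f x))] :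
    LocallyIntegrable f μ := by
  intro x
  obtain ⟨u, hu, huT⟩ := (μ.withDensity fun x => ENNReal.ofReal (f x)).finiteAt_nhds x
  refine ⟨u, hu, hf.restrict, ?_⟩
  calc ∫⁻ y in u, ‖f y‖ₑ ∂μ = ∫⁻ y in u, ENNReal.ofReal (f y) ∂μ :=
        lintegral_congr fun y => Real.enorm_of_nonneg (hf0 y)
    _ ≤ μ.withDensity (fun x => ENNReal.ofReal (f x)) u := withDensity_apply_le _ _
    _ < ⊤ := huT

theorem LocallyAdmissibleWeight.congr_ae {p : ℝ} {w v : ℝ → ℝ} (h : LocallyAdmissibleWeight p w)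
    (hwv : w =ᵐ[volume] v) (hv : ∀ x, 0 ≤ v x) : LocallyAdmissibleWeight p v := by
  have hμ : (volume.withDensity fun x => ENNReal.ofReal (w x)) =
      volume.withDensity fun x => ENNReal.ofReal (v x) :=
    withDensity_congr_ae (hwv.fun_comp ENNReal.ofReal)
  exact ⟨hv, h.2.1.congr hwv, hμ ▸ h.2.2.1, hμ ▸ h.2.2.2⟩

theorem withDensity_ofReal_rpow_Ioo_pos {w : ℝ → ℝ} (hwm : Measurable w) {e : ℝ} (he : e < 0)
    {a b : ℝ} (hab : a < b) :
    0 < volume.withDensity (fun x => ENNReal.ofReal (w x) ^ e) (Ioo a b) := by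
  refine pos_iff_ne_zero.mpr fun h0 => ?_
  have hne : {x | ENNReal.ofReal (w x) ^ e ≠ 0} = univ :=
    eq_univ_of_forall fun x hx => by
      rcases ENNReal.rpow_eq_zero_iff.mp hx with ⟨-, h⟩ | ⟨h, -⟩
      · linarith
      · exact ENNReal.ofReal_ne_top h
  rw [withDensity_apply_eq_zero (hwm.ennreal_ofReal.pow_const _), hne, univ_inter,
    Real.volume_Ioo, ENNReal.ofReal_eq_zero] at h0
  linarith

theorem locallyAdmissible_of_forall_apPairWithin {μ ν : Measure ℝ} {p q : ℝ}
    (hpq : p.HolderConjugate q) (hμ : IsMeasureOnR μ) (hν : IsMeasureOnR ν)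
    (hHolder : ∀ a b (g : ℝ → ℝ≥0∞), Measurable g →
      ∫⁻ x in Ioo a b, g x ≤ (∫⁻ x in Ioo a b, g x ^ q ∂ν) ^ (1 / q) * μ (Ioo a b) ^ (1 / p))
    (hAp : ∀ y, ∃ R > 0, ∃ C > 0, ApPairWithin μ ν p q C (Ioo (y - R) (y + R))) :
    LocallyAdmissible ν q := by
  intro y
  obtain ⟨R, hR, C, hC, hA⟩ := hAp y
  have hvol : ∀ a b, volume (Ioo a b) ≤ ν (Ioo a b) ^ (1 / q) * μ (Ioo a b) ^ (1 / p) :=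
    fun a b => by simpa using hHolder a b 1 measurable_const
  refine ⟨R / 2, by positivity, ⟨ENNReal.ofReal C ^ q,
    ENNReal.rpow_pos (ENNReal.ofReal_pos.mpr hC) ENNReal.ofReal_ne_top,
    ENNReal.rpow_lt_top_of_nonneg hpq.symm.nonneg ENNReal.ofReal_ne_top,
    hA.doublingWithinC hpq hμ hvol⟩, C, hC, 1, le_rfl, ?_⟩
  exact (hA.mono (Ioo_subset_Ioo (by linarith) (by linarith))).poincareWithinC hpq hν hHolder

theorem LocallyAdmissibleWeight.rpow_one_sub {p q : ℝ} (hpq : p.HolderConjugate q)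
    {w : ℝ → ℝ} (hwm : Measurable w) (h : LocallyAdmissibleWeight p w) :
    LocallyAdmissibleWeight q fun x => w x ^ (1 - q) := by
  obtain ⟨hw0, -, hμ, hadm⟩ := h
  set μ := volume.withDensity fun x => ENNReal.ofReal (w x)
  set ν := volume.withDensity fun x => ENNReal.ofReal (w x) ^ (1 - q)
  have hq : 1 - q < 0 := by linarith [hpq.symm.lt]
  have hAp : ∀ y, ∃ R > 0, ∃ C > 0, ApPairWithin μ ν p q C (Ioo (y - R) (y + R)) := by
    intro y
    obtain ⟨R, hR, ⟨Cd, hCd0, hCdT, hD⟩, CP, hCP, lam, hlam, hP⟩ := hadm y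
    have hCd : 0 < Cd.toReal := ENNReal.toReal_pos hCd0.ne' hCdT.ne
    exact ⟨R / 4, by positivity, Cd.toReal ^ 3 * (2 * CP), by positivity,
      apPairWithin_of_doublingWithinC_of_poincareWithinC hpq hw0 hwm rfl hμ hCdT.ne hD hP hlam⟩
  have hνfin : IsLocallyFiniteMeasure ν := ⟨fun y => by
    obtain ⟨R, hR, C, -, hA⟩ := hAp y
    exact ⟨_, Ioo_mem_nhds (by linarith) (by linarith), hA.measure_lt_top hpq hμ hR subset_rfl⟩⟩
  have hpos : ∀ᵐ x, 0 < w x := by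
    filter_upwards [ae_lt_top_of_isLocallyFiniteMeasure_withDensity
      (hwm.ennreal_ofReal.pow_const (1 - q))] with x hx
    by_contra h0
    rw [ENNReal.ofReal_eq_zero.mpr (not_lt.mp h0), ENNReal.zero_rpow_of_neg hq] at hx
    exact lt_irrefl _ hx
  have hνeq : (volume.withDensity fun x => ENNReal.ofReal (w x ^ (1 - q))) = ν :=
    withDensity_congr_ae (by
      filter_upwards [hpos] with x hx using (ENNReal.ofReal_rpow_of_pos hx).symm)
  have hν : IsMeasureOnR ν := fun a b hab =>
    ⟨withDensity_ofReal_rpow_Ioo_pos hwm hq hab, measure_Ioo_lt_top⟩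
  have hHolder : ∀ a b (g : ℝ → ℝ≥0∞), Measurable g →
      ∫⁻ x in Ioo a b, g x ≤ (∫⁻ x in Ioo a b, g x ^ q ∂ν) ^ (1 / q) * μ (Ioo a b) ^ (1 / p) :=
    fun a b g hg => setLIntegral_le_lintegral_rpow_withDensity_mul hpq hwm.ennreal_ofReal
      (by filter_upwards [hpos] with x hx using (ENNReal.ofReal_pos.mpr hx).ne')
      (ae_of_all _ fun _ => ENNReal.ofReal_ne_top) measurableSet_Ioo hg
  have : IsLocallyFiniteMeasure (volume.withDensity fun x => ENNReal.ofReal (w x ^ (1 - q))) :=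
    hνeq ▸ hνfin
  exact ⟨fun x => Real.rpow_nonneg (hw0 x) _,
    locallyIntegrable_of_isLocallyFiniteMeasure_withDensity (hwm.pow_const _).aestronglyMeasurable
      fun x => Real.rpow_nonneg (hw0 x) _,
    hνeq ▸ hν, hνeq ▸ locallyAdmissible_of_forall_apPairWithin hpq hμ hν hHolder hAp⟩

/-- if `w₁` is a locally `p`-admissible weight on ℝ with
`p > 1`, then `w₁^{1/(1-p)}` is a locally `p/(p-1)`-admissible weight. -/
theorem conjugate_locally_admissible_weight (p : ℝ) (hp : 1 < p)
    (w₁ : ℝ → ℝ) (h : LocallyAdmissibleWeight p w₁) :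
    LocallyAdmissibleWeight (p/(p-1)) (fun x => w₁ x ^ (1/(1-p))) := by
  have hpq : p.HolderConjugate (p / (p - 1)) := Real.HolderConjugate.conjExponent hp
  have hexp : 1 / (1 - p) = 1 - p / (p - 1) := by
    field_simp [sub_ne_zero.mpr hp.ne, sub_ne_zero.mpr hp.ne']
    ring
  obtain ⟨v, hvm, hv0, hwv⟩ := h.2.1.aestronglyMeasurable.aemeasurable.exists_measurable_nonneg
    (ae_of_all _ h.1)
  have hv := (h.congr_ae hwv hv0).rpow_one_sub hpq hvm
  rw [hexp]
  exact hv.congr_ae (hwv.symm.fun_comp fun t => t ^ (1 - p / (p - 1)))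
    fun x => Real.rpow_nonneg (h.1 x) _
end

section
/- Let M > 0 and let μ be a measure on ℝ that is doubling within the interval (−M, 2M) with doubling constant C_d. Define the reflected measure μ̂ on Borel subsets A of [−M, M] by μ̂(A) = μ(A ∩ [0,M]) + μ((−A) ∩ [0,M]), where −A = {x ∈ ℝ : −x ∈ A}. Then for every interval I = (x−r, x+r) with 0 ≤ x ≤ M/2 and 0 < r ≤ M/4, one has μ̂(2I) ≤ 4C_d³ μ̂(I), where 2I = (x−2r, x+2r). -/
open MeasureTheory Set Filter
open scoped ENNReal NNReal Topology

/-- part of Lemma 4.4's proof: if `μ` is doubling within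
`(-M, 2M)` with constant `Cd`, then the reflected measure
`μ̂(A) = μ(A ∩ [0,M]) + μ((-A) ∩ [0,M])` satisfies
`μ̂(2I) ≤ 4 Cd³ μ̂(I)` for all intervals `I = (x-r, x+r)` with
`0 ≤ x ≤ M/2` and `0 < r ≤ M/4`. -/
theorem reflected_measure_doubling (M : ℝ) (hM : 0 < M) (μ : Measure ℝ)
    (hμ : IsMeasureOnR μ) (Cd : ℝ≥0∞) (hCd : Cd ≠ ⊤)
    (hd : DoublingWithinC μ Cd (Ioo (-M) (2*M))) :
    ∀ x r : ℝ, 0 ≤ x → x ≤ M/2 → 0 < r → r ≤ M/4 →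
      μ (Ioo (x - 2*r) (x + 2*r) ∩ Icc 0 M) +
        μ ({y : ℝ | -y ∈ Ioo (x - 2*r) (x + 2*r)} ∩ Icc 0 M) ≤
      4 * Cd^3 * (μ (Ioo (x - r) (x + r) ∩ Icc 0 M) +
        μ ({y : ℝ | -y ∈ Ioo (x - r) (x + r)} ∩ Icc 0 M)) := by
  intro x r hx hxM hr hrM
  -- three doublings around center x + r/2
  have hd1 := hd (x + r/2) (r/2) (by positivity) (by
    intro y hy
    simp only [mem_Ioo] at hy ⊢
    constructor <;> linarith [hy.1, hy.2])
  have hd2 := hd (x + r/2) r hr (by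
    intro y hy
    simp only [mem_Ioo] at hy ⊢
    constructor <;> linarith [hy.1, hy.2])
  have hd3 := hd (x + r/2) (2*r) (by positivity) (by
    intro y hy
    simp only [mem_Ioo] at hy ⊢
    constructor <;> linarith [hy.1, hy.2])
  rw [show x + r/2 - 2*(r/2) = x + r/2 - r from by ring,
    show x + r/2 + 2*(r/2) = x + r/2 + r from by ring,
    show x + r/2 - r/2 = x from by ring,
    show x + r/2 + r/2 = x + r from by ring] at hd1
  have hchain : μ (Ioo (x - 2*r) (x + 2*r)) ≤ Cd * (Cd * (Cd * μ (Ioo x (x + r)))) := by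
    calc μ (Ioo (x - 2*r) (x + 2*r))
        ≤ μ (Ioo (x + r/2 - 2*(2*r)) (x + r/2 + 2*(2*r))) := by
          apply measure_mono
          apply Ioo_subset_Ioo <;> linarith
      _ ≤ Cd * μ (Ioo (x + r/2 - 2*r) (x + r/2 + 2*r)) := hd3
      _ ≤ Cd * (Cd * μ (Ioo (x + r/2 - r) (x + r/2 + r))) := by gcongr
      _ ≤ Cd * (Cd * (Cd * μ (Ioo x (x + r)))) := by gcongr
  have hsub1 : Ioo (x - 2*r) (x + 2*r) ∩ Icc 0 M ⊆ Ioo (x - 2*r) (x + 2*r) :=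
    inter_subset_left
  have hsub2 : {y : ℝ | -y ∈ Ioo (x - 2*r) (x + 2*r)} ∩ Icc 0 M ⊆
      Ioo (x - 2*r) (x + 2*r) := by
    rintro y ⟨hy1, hy2⟩
    simp only [mem_setOf_eq, mem_Ioo] at hy1
    simp only [mem_Icc] at hy2
    constructor <;> linarith [hy1.1, hy1.2, hy2.1]
  have hsub3 : Ioo x (x + r) ⊆ Ioo (x - r) (x + r) ∩ Icc 0 M := by
    rintro y ⟨hy1, hy2⟩
    refine ⟨⟨by linarith, hy2⟩, by constructor <;> linarith⟩
  calc μ (Ioo (x - 2*r) (x + 2*r) ∩ Icc 0 M) +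
        μ ({y : ℝ | -y ∈ Ioo (x - 2*r) (x + 2*r)} ∩ Icc 0 M)
      ≤ μ (Ioo (x - 2*r) (x + 2*r)) + μ (Ioo (x - 2*r) (x + 2*r)) :=
        add_le_add (measure_mono hsub1) (measure_mono hsub2)
    _ = 2 * μ (Ioo (x - 2*r) (x + 2*r)) := (two_mul _).symm
    _ ≤ 2 * (Cd * (Cd * (Cd * μ (Ioo x (x + r))))) := by gcongr
    _ = 2 * Cd^3 * μ (Ioo x (x + r)) := by ring
    _ ≤ 4 * Cd^3 * (μ (Ioo (x - r) (x + r) ∩ Icc 0 M) +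
        μ ({y : ℝ | -y ∈ Ioo (x - r) (x + r)} ∩ Icc 0 M)) := by
        gcongr
        · norm_num
        · exact le_trans (measure_mono hsub3) le_self_add
end

section
/- Let α ≥ 0, let w(x) = x^α on [0,1], and let dμ = w dx. Then for every interval (a,b) ⊂ [0,1], every μ-integrable function u on (a,b) and every upper gradient g of u on (a,b), ⨍_{(a,b)} |u − u_{(a,b)}| dμ ≤ (b − a) ⨍_{(a,b)} g dμ, where u_{(a,b)} = ⨍_{(a,b)} u dμ denotes the μ-average; that is, μ supports a 1-Poincaré inequality on every subinterval of [0,1] with dilation constant 1 and constant 2. -/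
open MeasureTheory Set Filter
open scoped ENNReal NNReal Topology

/-!
Averaging `|u t - u s|` over `s, t ∈ B` controls the oscillation of `u` on `B`. Each difference is
at most the integral of `g` over the segment between `s` and `t`, and Tonelli turns the resulting
triple integral into `∫_B g(x) K(x) dx` with `K(x) = 2 μ(B ∩ (-∞, x]) μ(B ∩ [x, ∞))`. Hence any
density `w` with `K ≤ C μ(B) w` on `B` gives the Poincaré inequality with constant `C`. For
`w(x) = x^α` the interval measures are `(q^(α+1) - p^(α+1)) / (α+1)`, and the bound
`K ≤ (b - a) μ(B) w` is an elementary inequality for `x ↦ x^(α+1)`.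
-/

theorem ofReal_abs_sub_setAverage_mul_le {X : Type*} [MeasurableSpace X] {μ : Measure X}
    {s : Set X} {u : X → ℝ} (hs : μ s ≠ ⊤) (hu : IntegrableOn u s μ) (t : X) :
    ENNReal.ofReal |u t - ⨍ x in s, u x ∂μ| * μ s ≤
      ∫⁻ x in s, ENNReal.ofReal |u t - u x| ∂μ := by
  have : IsFiniteMeasure (μ.restrict s) := isFiniteMeasure_restrict.2 hs
  have hmean : ∫ x in s, (u t - u x) ∂μ = μ.real s * (u t - ⨍ x in s, u x ∂μ) := by
    rw [integral_sub (integrable_const _) hu, setIntegral_const, ← measure_smul_setAverage _ hs,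
      smul_eq_mul, smul_eq_mul, mul_sub]
  calc ENNReal.ofReal |u t - ⨍ x in s, u x ∂μ| * μ s
      = ‖∫ x in s, (u t - u x) ∂μ‖ₑ := by
        rw [hmean, enorm_mul, Real.enorm_eq_ofReal_abs, Real.enorm_eq_ofReal_abs,
          abs_of_nonneg measureReal_nonneg, measureReal_def, ENNReal.ofReal_toReal hs, mul_comm]
    _ ≤ ∫⁻ x in s, ‖u t - u x‖ₑ ∂μ := enorm_integral_le_lintegral_enorm _
    _ = ∫⁻ x in s, ENNReal.ofReal |u t - u x| ∂μ := by simp only [Real.enorm_eq_ofReal_abs]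

theorem IsUpperGradientOn.ofReal_abs_sub_le {g u : ℝ → ℝ} {J : Set ℝ}
    (hg : IsUpperGradientOn g u J) {s t : ℝ} (hst : uIcc s t ⊆ J) :
    ENNReal.ofReal |u t - u s| ≤ ∫⁻ x in uIcc s t, ENNReal.ofReal (g x) := by
  rcases le_total s t with h | h
  · rw [uIcc_of_le h] at hst ⊢
    exact hg.2.2 s t h hst
  · rw [uIcc_of_ge h, abs_sub_comm] at *
    exact hg.2.2 t s h hst

theorem measurableSet_mem_uIcc {X : Type*} [MeasurableSpace X] {f g h : X → ℝ}
    (hf : Measurable f) (hg : Measurable g) (hh : Measurable h) :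
    MeasurableSet {z | h z ∈ uIcc (f z) (g z)} := by
  simp only [uIcc, mem_Icc, ofPred_and]
  exact (measurableSet_le (hf.min hg) hh).inter (measurableSet_le hh (hf.max hg))

theorem lintegral_lintegral_lintegral_indicator_uIcc_le (ν ρ : Measure ℝ) [SFinite ν] [SFinite ρ]
    {f : ℝ → ℝ≥0∞} (hf : Measurable f) :
    ∫⁻ t, ∫⁻ s, ∫⁻ x, (uIcc s t).indicator f x ∂ρ ∂ν ∂ν ≤
      ∫⁻ x, f x * (2 * (ν (Iic x) * ν (Ici x))) ∂ρ := by
  have hF : Measurable fun q : (ℝ × ℝ) × ℝ => (uIcc q.1.2 q.1.1).indicator f q.2 :=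
    (hf.comp measurable_snd).indicator
      (measurableSet_mem_uIcc (by fun_prop) (by fun_prop) (by fun_prop))
  calc ∫⁻ t, ∫⁻ s, ∫⁻ x, (uIcc s t).indicator f x ∂ρ ∂ν ∂ν
      = ∫⁻ p : ℝ × ℝ, ∫⁻ x, (uIcc p.2 p.1).indicator f x ∂ρ ∂ν.prod ν :=
        (lintegral_prod _ hF.lintegral_prod_right'.aemeasurable).symm
    _ = ∫⁻ x, ∫⁻ p : ℝ × ℝ, (uIcc p.2 p.1).indicator f x ∂ν.prod ν ∂ρ :=
        lintegral_lintegral_swap hF.aemeasurable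
    _ ≤ ∫⁻ x, f x * (2 * (ν (Iic x) * ν (Ici x))) ∂ρ := by
        refine lintegral_mono fun x => ?_
        have hind : ∀ p : ℝ × ℝ, (uIcc p.2 p.1).indicator f x =
            {p : ℝ × ℝ | x ∈ uIcc p.2 p.1}.indicator (fun _ => f x) p := fun p => by
          by_cases h : x ∈ uIcc p.2 p.1 <;> simp [h]
        have hsub : {p : ℝ × ℝ | x ∈ uIcc p.2 p.1} ⊆ Iic x ×ˢ Ici x ∪ Ici x ×ˢ Iic x := by
          intro p hp
          rcases mem_uIcc.1 hp with h | h
          exacts [Or.inr ⟨h.2, h.1⟩, Or.inl h]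
        simp_rw [hind]
        rw [lintegral_indicator_const
          (measurableSet_mem_uIcc measurable_snd measurable_fst measurable_const)]
        gcongr
        calc (ν.prod ν) {p : ℝ × ℝ | x ∈ uIcc p.2 p.1}
            ≤ (ν.prod ν) (Iic x ×ˢ Ici x) + (ν.prod ν) (Ici x ×ˢ Iic x) :=
              (measure_mono hsub).trans (measure_union_le _ _)
          _ = 2 * (ν (Iic x) * ν (Ici x)) := by
              rw [Measure.prod_prod, Measure.prod_prod, mul_comm (ν (Ici x)), two_mul]

theorem poinRHS_one (μ : Measure ℝ) (g : ℝ → ℝ≥0∞) (B : Set ℝ) :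
    PoinRHS μ g 1 B = (∫⁻ t in B, g t ∂μ) / μ B := by
  simp [PoinRHS]

theorem poinLHS_withDensity_le {w : ℝ → ℝ≥0∞} (hw : Measurable w) {B : Set ℝ}
    (hB : B.OrdConnected) {u g : ℝ → ℝ} {C : ℝ≥0∞} (h0 : volume.withDensity w B ≠ 0)
    (hT : volume.withDensity w B ≠ ⊤) (hu : IntegrableOn u B (volume.withDensity w))
    (hg : IsUpperGradientOn g u B)
    (hK : ∀ x ∈ B, 2 * (volume.withDensity w (Iic x ∩ B) * volume.withDensity w (Ici x ∩ B)) ≤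
      C * volume.withDensity w B * w x) :
    PoinLHS (volume.withDensity w) u B ≤
      C * PoinRHS (volume.withDensity w) (fun t => ENNReal.ofReal (g t)) 1 B := by
  set μ := volume.withDensity w
  set f : ℝ → ℝ≥0∞ := fun x => ENNReal.ofReal (g x)
  have hBm : MeasurableSet B := hB.measurableSet
  have hf : Measurable f := hg.2.1.ennreal_ofReal
  have hdouble : ∫⁻ t in B, ∫⁻ s in B, ENNReal.ofReal |u t - u s| ∂μ ∂μ ≤
      C * μ B * ∫⁻ x in B, f x ∂μ := calc
    _ ≤ ∫⁻ t in B, ∫⁻ s in B, (∫⁻ x in B, (uIcc s t).indicator f x) ∂μ ∂μ := by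
      refine setLIntegral_mono' hBm fun t ht => setLIntegral_mono' hBm fun s hs => ?_
      rw [lintegral_indicator measurableSet_uIcc, Measure.restrict_restrict measurableSet_uIcc,
        inter_eq_left.2 (hB.uIcc_subset hs ht)]
      exact hg.ofReal_abs_sub_le (hB.uIcc_subset hs ht)
    _ ≤ ∫⁻ x in B, f x * (2 * (μ.restrict B (Iic x) * μ.restrict B (Ici x))) :=
      lintegral_lintegral_lintegral_indicator_uIcc_le _ _ hf
    _ ≤ ∫⁻ x in B, C * μ B * (w x * f x) := by
      refine setLIntegral_mono' hBm fun x hx => ?_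
      rw [Measure.restrict_apply measurableSet_Iic, Measure.restrict_apply measurableSet_Ici]
      calc f x * (2 * (μ (Iic x ∩ B) * μ (Ici x ∩ B))) ≤ f x * (C * μ B * w x) :=
            mul_le_mul_right (hK x hx) _
        _ = C * μ B * (w x * f x) := by ring
    _ = C * μ B * ∫⁻ x in B, f x ∂μ := by
      rw [lintegral_const_mul (f := fun x => w x * f x) _ (hw.mul hf),
        setLIntegral_withDensity_eq_setLIntegral_mul _ hw hf hBm]
      rfl
  have hcentre : (∫⁻ t in B, ENNReal.ofReal |u t - ⨍ x in B, u x ∂μ| ∂μ) * μ B ≤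
      ∫⁻ t in B, ∫⁻ s in B, ENNReal.ofReal |u t - u s| ∂μ ∂μ := by
    rw [← lintegral_mul_const' _ _ hT]
    exact lintegral_mono fun t => ofReal_abs_sub_setAverage_mul_le hT hu t
  have hL : ∫⁻ t in B, ENNReal.ofReal |u t - ⨍ x in B, u x ∂μ| ∂μ ≤
      C * ∫⁻ x in B, f x ∂μ := by
    rw [← ENNReal.mul_le_mul_iff_left h0 hT]
    calc _ ≤ C * μ B * ∫⁻ x in B, f x ∂μ := hcentre.trans hdouble
      _ = C * (∫⁻ x in B, f x ∂μ) * μ B := by ring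
  rw [PoinLHS, poinRHS_one, ← mul_div_assoc]
  exact ENNReal.div_le_div_right hL _

theorem rpow_sub_rpow_le_mul {p q β : ℝ} (hp : 0 ≤ p) (hpq : p ≤ q) (hβ : 1 ≤ β) :
    q ^ β - p ^ β ≤ β * q ^ (β - 1) * (q - p) := by
  rcases hpq.eq_or_lt with rfl | hlt
  · simp
  have hq : 0 < q := hp.trans_lt hlt
  have hslope := (convexOn_rpow hβ).slope_le_of_hasDerivAt (mem_Ici.2 hp) (mem_Ici.2 hq.le) hlt
    (Real.hasDerivAt_rpow_const (Or.inl hq.ne'))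
  rwa [slope_def_field, div_le_iff₀ (sub_pos.2 hlt)] at hslope

theorem two_mul_rpow_sub_mul_rpow_sub_le {a x b β : ℝ} (ha : 0 ≤ a) (hax : a < x) (hxb : x < b)
    (hβ : 1 ≤ β) :
    2 * ((x ^ β - a ^ β) * (b ^ β - x ^ β)) ≤
      (b - a) * (β * x ^ (β - 1)) * (b ^ β - a ^ β) := by
  have hx : 0 < x := ha.trans_lt hax
  have hb : 0 < b := hx.trans hxb
  have hax' : a ^ β ≤ x ^ β := Real.rpow_le_rpow ha hax.le (by linarith)
  have hxb' : x ^ β ≤ b ^ β := Real.rpow_le_rpow hx.le hxb.le (by linarith)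
  have hX : 0 ≤ β * x ^ (β - 1) := mul_nonneg (by linarith) (Real.rpow_nonneg hx.le _)
  have hnn : 0 ≤ β * x ^ (β - 1) * (b ^ β - a ^ β) := mul_nonneg hX (sub_nonneg.2 (hax'.trans hxb'))
  rcases le_total (2 * (x - a)) (b - a) with hmid | hmid
  · have h := rpow_sub_rpow_le_mul ha hax.le hβ
    nlinarith [mul_le_mul_of_nonneg_right hmid hnn,
      mul_le_mul h (sub_le_sub_left hax' (b ^ β)) (sub_nonneg.2 hxb') (by nlinarith)]
  · have h := rpow_sub_rpow_le_mul hx.le hxb.le hβ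
    have hxx : x ^ β = x ^ (β - 1) * x := by rw [← Real.rpow_add_one hx.ne']; ring_nf
    have hbb : b ^ β = b ^ (β - 1) * b := by rw [← Real.rpow_add_one hb.ne']; ring_nf
    have hXB : x ^ (β - 1) ≤ b ^ (β - 1) := Real.rpow_le_rpow hx.le hxb.le (by linarith)
    have hA : 0 ≤ a ^ β := Real.rpow_nonneg ha _
    -- `y ^ (β - 1) / y ^ β = 1 / y` decreases, which trades `b ^ (β - 1)` for `x ^ (β - 1)`
    have htrade : (x ^ β - a ^ β) * b ^ (β - 1) ≤ x ^ (β - 1) * (b ^ β - a ^ β) := by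
      rw [hxx, hbb]
      nlinarith [mul_le_mul_of_nonneg_left hXB hA,
        mul_nonneg (Real.rpow_nonneg hx.le (β - 1)) (sub_nonneg.2 hxb.le)]
    calc 2 * ((x ^ β - a ^ β) * (b ^ β - x ^ β))
        ≤ 2 * ((x ^ β - a ^ β) * (β * b ^ (β - 1) * (b - x))) := by gcongr
      _ = 2 * β * (b - x) * ((x ^ β - a ^ β) * b ^ (β - 1)) := by ring
      _ ≤ 2 * β * (b - x) * (x ^ (β - 1) * (b ^ β - a ^ β)) := by gcongr
      _ ≤ (b - a) * (β * x ^ (β - 1)) * (b ^ β - a ^ β) := by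
          nlinarith [mul_le_mul_of_nonneg_right hmid hnn]

theorem withDensity_volume_congr_ae {f : ℝ → ℝ≥0∞} {s t : Set ℝ} (h : s =ᵐ[volume] t) :
    volume.withDensity f s = volume.withDensity f t :=
  measure_congr ((withDensity_absolutelyContinuous _ _).ae_eq h)

theorem withDensity_rpow_Ioc {α p q : ℝ} (hα : -1 < α) (hp : 0 ≤ p) (hpq : p ≤ q) :
    volume.withDensity (fun x => ENNReal.ofReal (x ^ α)) (Ioc p q) =
      ENNReal.ofReal ((q ^ (α + 1) - p ^ (α + 1)) / (α + 1)) := by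
  have hint : IntegrableOn (fun x : ℝ => x ^ α) (Ioc p q) :=
    (intervalIntegrable_iff_integrableOn_Ioc_of_le hpq).1
      (intervalIntegral.intervalIntegrable_rpow' hα)
  have hnonneg : 0 ≤ᵐ[volume.restrict (Ioc p q)] fun x : ℝ => x ^ α :=
    (ae_restrict_mem measurableSet_Ioc).mono fun x hx => Real.rpow_nonneg (hp.trans hx.1.le) α
  rw [withDensity_apply _ measurableSet_Ioc, ← ofReal_integral_eq_lintegral_ofReal hint hnonneg,
    ← intervalIntegral.integral_of_le hpq, integral_rpow (Or.inl hα)]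

theorem withDensity_rpow_kernel_le {α a b x : ℝ} (hα : 0 ≤ α) (ha : 0 ≤ a) (hx : x ∈ Ioo a b) :
    2 * (volume.withDensity (fun x => ENNReal.ofReal (x ^ α)) (Iic x ∩ Ioo a b) *
        volume.withDensity (fun x => ENNReal.ofReal (x ^ α)) (Ici x ∩ Ioo a b)) ≤
      ENNReal.ofReal (b - a) * volume.withDensity (fun x => ENNReal.ofReal (x ^ α)) (Ioo a b) *
        ENNReal.ofReal (x ^ α) := by
  obtain ⟨hax, hxb⟩ := hx
  have hx0 : 0 < x := ha.trans_lt hax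
  have hβ : 0 < α + 1 := by linarith
  have hmono : MonotoneOn (fun y : ℝ => y ^ (α + 1)) (Ici 0) := fun y hy z _ hyz =>
    Real.rpow_le_rpow hy hyz hβ.le
  have hP : 0 ≤ (x ^ (α + 1) - a ^ (α + 1)) / (α + 1) :=
    div_nonneg (sub_nonneg.2 (hmono ha hx0.le hax.le)) hβ.le
  have hM : 0 ≤ (b ^ (α + 1) - a ^ (α + 1)) / (α + 1) :=
    div_nonneg (sub_nonneg.2 (hmono ha (ha.trans (hax.trans hxb).le) (hax.trans hxb).le)) hβ.le
  have hleft : Iic x ∩ Ioo a b = Ioc a x := by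
    ext y; simp only [mem_inter_iff, mem_Iic, mem_Ioo, mem_Ioc]; grind
  have hright : Ici x ∩ Ioo a b = Ico x b := by
    ext y; simp only [mem_inter_iff, mem_Ici, mem_Ioo, mem_Ico]; grind
  have hα' : -1 < α := by linarith
  rw [hleft, hright, withDensity_volume_congr_ae Ico_ae_eq_Ioc,
    withDensity_volume_congr_ae Ioo_ae_eq_Ioc, withDensity_rpow_Ioc hα' ha hax.le,
    withDensity_rpow_Ioc hα' hx0.le hxb.le, withDensity_rpow_Ioc hα' ha (hax.trans hxb).le,
    ← ENNReal.ofReal_mul hP, ← ENNReal.ofReal_ofNat, ← ENNReal.ofReal_mul zero_le_two,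
    ← ENNReal.ofReal_mul (by linarith), ← ENNReal.ofReal_mul (mul_nonneg (by linarith) hM)]
  refine ENNReal.ofReal_le_ofReal ?_
  have key := two_mul_rpow_sub_mul_rpow_sub_le ha hax hxb (by linarith : 1 ≤ α + 1)
  rw [add_sub_cancel_right] at key
  rw [div_mul_div_comm, mul_div_assoc', mul_div_assoc', div_mul_eq_mul_div,
    div_le_div_iff₀ (by positivity) hβ]
  linarith [mul_le_mul_of_nonneg_right key hβ.le]

/-- Example 5.1: for `w(x) = x^α`, `α ≥ 0`, and
`dμ = w dx`, the `1`-Poincaré inequality holds on every subinterval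
`(a,b) ⊆ [0,1]` with dilation constant `1` and constant `2`, i.e.
`⨍_{(a,b)} |u - u_{(a,b)}| dμ ≤ (b-a) ⨍_{(a,b)} g dμ`. -/
theorem power_weight_one_poincare (α : ℝ) (hα : 0 ≤ α) :
    ∀ a b : ℝ, 0 ≤ a → a < b → b ≤ 1 →
      ∀ u g : ℝ → ℝ,
        IntegrableOn u (Ioo a b)
          (volume.withDensity fun x => ENNReal.ofReal (x ^ α)) →
        IsUpperGradientOn g u (Ioo a b) →
        PoinLHS (volume.withDensity fun x => ENNReal.ofReal (x ^ α)) u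
            (Ioo a b) ≤
          ENNReal.ofReal (b - a) *
            PoinRHS (volume.withDensity fun x => ENNReal.ofReal (x ^ α))
              (fun t => ENNReal.ofReal (g t)) 1 (Ioo a b) := by
  intro a b ha hab _ u g hu hg
  have hμB : volume.withDensity (fun x => ENNReal.ofReal (x ^ α)) (Ioo a b) =
      ENNReal.ofReal ((b ^ (α + 1) - a ^ (α + 1)) / (α + 1)) := by
    rw [withDensity_volume_congr_ae Ioo_ae_eq_Ioc, withDensity_rpow_Ioc (by linarith) ha hab.le]
  have hpos : 0 < (b ^ (α + 1) - a ^ (α + 1)) / (α + 1) :=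
    div_pos (sub_pos.2 (Real.rpow_lt_rpow ha hab (by linarith))) (by linarith)
  refine poinLHS_withDensity_le (by fun_prop) ordConnected_Ioo ?_ (by simp [hμB]) hu hg
    fun x hx => withDensity_rpow_kernel_le hα ha hx
  simpa [hμB] using hpos
end
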